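/- arXiv:math/0502128 — 3 statements merged into one kernel-verified Lean document; each statement's English description precedes it below -/
import Mathlib

section
/- Let (g, g̃) be a compatible pair of metrics on a nonempty open set U ⊆ ℝ^n and let Ω be a smooth nowhere-vanishing real function on U. Then (Ω²g, Ω²g̃) is a compatible pair of metrics on U. -/
open scoped BigOperators

noncomputable section

/-- Points of ℝⁿ. -/
abbrev Pt (n : ℕ) := Fin n → ℝ
/-- Vector fields (globally defined functions; conditions are imposed on an open set). -/
abbrev VF (n : ℕ) := Pt n → Fin n → ℝ
/-- 1-forms. -/
abbrev OneForm (n : ℕ) := Pt n → Fin n → ℝ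
/-- Metrics: smooth maps into symmetric invertible matrices. -/
abbrev Met (n : ℕ) := Pt n → Matrix (Fin n) (Fin n) ℝ
/-- (1,2)-tensor fields (multiplications on tangent vectors): components `c t k i j` = c^k_{ij}(t). -/
abbrev Mul2 (n : ℕ) := Pt n → Fin n → Fin n → Fin n → ℝ

variable {n : ℕ}

/-- Partial derivative ∂ᵢ f (t). -/
def pder (i : Fin n) (f : Pt n → ℝ) (t : Pt n) : ℝ :=
  fderiv ℝ f t (Pi.single i 1)

/-- Smoothness (on `U`) of a vector field or a 1-form. -/
def SmoothVF (U : Set (Pt n)) (X : VF n) : Prop :=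
  ∀ k, ContDiffOn ℝ (⊤ : ℕ∞) (fun t => X t k) U

def SmoothMet (U : Set (Pt n)) (g : Met n) : Prop :=
  ∀ i j, ContDiffOn ℝ (⊤ : ℕ∞) (fun t => g t i j) U

def SmoothMul2 (U : Set (Pt n)) (c : Mul2 n) : Prop :=
  ∀ k i j, ContDiffOn ℝ (⊤ : ℕ∞) (fun t => c t k i j) U

/-- `g` is a (pseudo-Riemannian) metric on `U`: smooth, symmetric, invertible. -/
def IsMetricOn (U : Set (Pt n)) (g : Met n) : Prop :=
  SmoothMet U g ∧ ∀ t ∈ U, (g t).IsSymm ∧ IsUnit (g t)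

/-- The 1-form g(X). -/
def mdown (g : Met n) (X : VF n) : OneForm n := fun t k => ∑ j, g t k j * X t j
/-- The vector field g*α. -/
def mup (g : Met n) (α : OneForm n) : VF n := fun t k => ∑ j, (g t)⁻¹ k j * α t j
/-- g*(α, β). -/
def mup2 (g : Met n) (α β : OneForm n) (t : Pt n) : ℝ :=
  ∑ i, ∑ j, (g t)⁻¹ i j * α t i * β t j
/-- g(X, Y). -/
def mdown2 (g : Met n) (X Y : VF n) (t : Pt n) : ℝ :=
  ∑ i, ∑ j, g t i j * X t i * Y t j

/-- Christoffel symbols Γ(g)^k_{ij}(t). -/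
def chr (g : Met n) (k i j : Fin n) (t : Pt n) : ℝ :=
  (1/2) * ∑ l, (g t)⁻¹ k l *
    (pder i (fun s => g s j l) t + pder j (fun s => g s i l) t - pder l (fun s => g s i j) t)

/-- Levi-Civita covariant derivative ∇^g_X Y of a vector field. -/
def covV (g : Met n) (X Y : VF n) : VF n :=
  fun t k => ∑ i, X t i * (pder i (fun s => Y s k) t + ∑ m, chr g k i m t * Y t m)

/-- Levi-Civita covariant derivative ∇^g_X α of a 1-form. -/
def covF (g : Met n) (X : VF n) (α : OneForm n) : OneForm n :=
  fun t k => ∑ i, X t i * (pder i (fun s => α s k) t - ∑ m, chr g m i k t * α t m)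

/-- Lie bracket [X, Y]. -/
def vbr (X Y : VF n) : VF n :=
  fun t k => ∑ i, (X t i * pder i (fun s => Y s k) t - Y t i * pder i (fun s => X s k) t)

/-- Curvature R(g)_{X,Y} Z = ∇_X ∇_Y Z − ∇_Y ∇_X Z − ∇_{[X,Y]} Z. -/
def curvV (g : Met n) (X Y Z : VF n) : VF n :=
  fun t k => covV g X (covV g Y Z) t k - covV g Y (covV g X Z) t k
    - covV g (vbr X Y) Z t k

/-- Curvature acting on 1-forms: (R(g)_{X,Y} α)(Z) = −α(R(g)_{X,Y} Z). -/
def curvF (g : Met n) (X Y : VF n) (α : OneForm n) : OneForm n :=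
  fun t k => - ∑ m, α t m * curvV g X Y (fun _ => Pi.single k 1) t m

/-- `g` is flat on `U`: the curvature tensor vanishes identically. -/
def FlatOn (U : Set (Pt n)) (g : Met n) : Prop :=
  ∀ X Y Z : VF n, SmoothVF U X → SmoothVF U Y → SmoothVF U Z →
    ∀ t ∈ U, ∀ k, curvV g X Y Z t k = 0

/-- `g` has constant sectional curvature `s` on `U`. -/
def ConstSecCurv (U : Set (Pt n)) (g : Met n) (s : ℝ) : Prop :=
  ∀ X Y : VF n, SmoothVF U X → SmoothVF U Y → ∀ t ∈ U,
    mdown2 g (curvV g X Y Y) X t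
      = s * (mdown2 g X X t * mdown2 g Y Y t - (mdown2 g X Y t) ^ 2)

/-- The metric g_λ of the pencil: its inverse matrix is g⁻¹ + λ g̃⁻¹. -/
def pencil (g g' : Met n) (lam : ℝ) : Met n :=
  fun t => ((g t)⁻¹ + lam • (g' t)⁻¹)⁻¹

/-- Almost compatibility of the pair (g, g̃) on `U`. -/
def AlmostCompatible (U : Set (Pt n)) (g g' : Met n) : Prop :=
  ∀ lam : ℝ, (∀ t ∈ U, IsUnit ((g t)⁻¹ + lam • (g' t)⁻¹)) →
    ∀ X : VF n, SmoothVF U X → ∀ α : OneForm n, SmoothVF U α →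
      ∀ t ∈ U, ∀ k,
        mup (pencil g g' lam) (covF (pencil g g' lam) X α) t k
          = mup g (covF g X α) t k + lam * mup g' (covF g' X α) t k

/-- Compatibility of the pair (g, g̃) on `U`. -/
def Compatible (U : Set (Pt n)) (g g' : Met n) : Prop :=
  AlmostCompatible U g g' ∧
  ∀ lam : ℝ, (∀ t ∈ U, IsUnit ((g t)⁻¹ + lam • (g' t)⁻¹)) →
    ∀ X Y : VF n, SmoothVF U X → SmoothVF U Y →
      ∀ α : OneForm n, SmoothVF U α →
        ∀ t ∈ U, ∀ k,
          mup (pencil g g' lam) (curvF (pencil g g' lam) X Y α) t k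
            = mup g (curvF g X Y α) t k + lam * mup g' (curvF g' X Y α) t k

/-- The multiplication α ∘ β = ∇^g_{g*α} β − ∇^{g̃}_{g*α} β on 1-forms. -/
def circM (g g' : Met n) (α β : OneForm n) : OneForm n :=
  fun t k => covF g (mup g α) β t k - covF g' (mup g α) β t k

/-- The endomorphism T(u) = g(E) ∘ u of 1-forms, as a pointwise matrix
(`∘` being tensorial in its second argument). -/
def Tmat (g g' : Met n) (E : VF n) (t : Pt n) : Matrix (Fin n) (Fin n) ℝ :=
  Matrix.of fun k m => circM g g' (mdown g E) (fun _ => Pi.single m 1) t k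

/-- The triple (g, g̃, E) is regular on `U` if T is invertible at every point. -/
def RegularTriple (U : Set (Pt n)) (g g' : Met n) (E : VF n) : Prop :=
  ∀ t ∈ U, IsUnit (Tmat g g' E t)

/-- T⁻¹(v). -/
def TinvF (g g' : Met n) (E : VF n) (v : OneForm n) : OneForm n :=
  fun t k => ∑ m, (Tmat g g' E t)⁻¹ k m * v t m

/-- The multiplication u • v = u ∘ T⁻¹(v) on 1-forms. -/
def bulF (g g' : Met n) (E : VF n) (u v : OneForm n) : OneForm n :=
  circM g g' u (TinvF g g' E v)

/-- The multiplication • on vector fields: X • Y = g̃*((g̃X) • (g̃Y)). -/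
def bulV (g g' : Met n) (E : VF n) (X Y : VF n) : VF n :=
  mup g' (bulF g g' E (mdown g' X) (mdown g' Y))

/-- The multiplication • associated to the regular triple (g, g̃, E), as a (1,2)-tensor. -/
def bulMul (g g' : Met n) (E : VF n) : Mul2 n :=
  fun t k i j => bulV g g' E (fun _ => Pi.single i 1) (fun _ => Pi.single j 1) t k

/-- Applying a (1,2)-tensor to vector fields. -/
def mapp (c : Mul2 n) (X Y : VF n) : VF n :=
  fun t k => ∑ i, ∑ j, c t k i j * X t i * Y t j

/-- Transporting a multiplication on tangent vectors to a multiplication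
on 1-forms via the metric: u • v := g̃((g̃*u) • (g̃*v)). -/
def formMul (g' : Met n) (c : Mul2 n) (u v : OneForm n) : OneForm n :=
  mdown g' (mapp c (mup g' u) (mup g' v))

/-- Lie derivative of a function. -/
def lieFun (E : VF n) (φ : Pt n → ℝ) : Pt n → ℝ :=
  fun t => ∑ i, E t i * pder i φ t

/-- Lie derivative of a 1-form: (L_E α)(X) = E(α(X)) − α([E,X]). -/
def lieOne (E : VF n) (α : OneForm n) : OneForm n :=
  fun t k => (∑ i, E t i * pder i (fun s => α s k) t) + ∑ i, α t i * pder k (fun s => E s i) t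

/-- Lie derivative of a metric: (L_E g)(X,Y) = E(g(X,Y)) − g([E,X],Y) − g(X,[E,Y]). -/
def lieMet (E : VF n) (g : Met n) : Met n := fun t =>
  Matrix.of fun k j =>
    (∑ i, E t i * pder i (fun s => g s k j) t)
    + (∑ i, g t i j * pder k (fun s => E s i) t)
    + (∑ i, g t k i * pder j (fun s => E s i) t)

/-- Lie derivative of a multiplication ((1,2)-tensor):
(L_E c)(u,v) = L_E(c(u,v)) − c(L_E u, v) − c(u, L_E v), componentwise. -/
def lieMul (E : VF n) (c : Mul2 n) : Mul2 n :=
  fun t k i j =>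
    vbr E (mapp c (fun _ => Pi.single i 1) (fun _ => Pi.single j 1)) t k
    - mapp c (vbr E (fun _ => Pi.single i 1)) (fun _ => Pi.single j 1) t k
    - mapp c (fun _ => Pi.single i 1) (vbr E (fun _ => Pi.single j 1)) t k

/-- Lie derivative of a multiplication on 1-forms (applied to the pencil multiplication ∘). -/
def lieCirc (E : VF n) (g g' : Met n) (u v : OneForm n) : OneForm n :=
  fun t k => lieOne E (circM g g' u v) t k - circM g g' (lieOne E u) v t k
    - circM g g' u (lieOne E v) t k

/-- ∇^g_X(•)(Y,Z) := ∇^g_X(Y•Z) − (∇^g_X Y)•Z − Y•(∇^g_X Z), for a multiplication c. -/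
def covMul (g : Met n) (c : Mul2 n) (X Y Z : VF n) : VF n :=
  fun t k => covV g X (mapp c Y Z) t k - mapp c (covV g X Y) Z t k
    - mapp c Y (covV g X Z) t k

/-- The (4,0)-tensor ∇^g(•)(X,Y,Z,V) := g(∇^g_X(•)(Y,Z), V). -/
def covMul4 (g : Met n) (c : Mul2 n) (X Y Z V : VF n) (t : Pt n) : ℝ :=
  mdown2 g (covMul g c X Y Z) V t

/-- Total symmetry of the (4,0)-tensor ∇^g(•) (the F-manifold condition). -/
def TotSym (U : Set (Pt n)) (g : Met n) (c : Mul2 n) : Prop :=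
  ∀ X Y Z V : VF n, SmoothVF U X → SmoothVF U Y → SmoothVF U Z → SmoothVF U V →
    ∀ t ∈ U,
      covMul4 g c X Y Z V t = covMul4 g c Y X Z V t ∧
      covMul4 g c X Y Z V t = covMul4 g c X Z Y V t ∧
      covMul4 g c X Y Z V t = covMul4 g c X Y V Z t

/-- Weak F-manifold structure (U, •, g̃, E), with identity `e`, •-inverse `Einv` of E,
and rescaling functions `Dt` (for the metric) and `k` (for the multiplication). -/
structure IsWeakF (U : Set (Pt n)) (c : Mul2 n) (g' : Met n) (E e Einv : VF n)
    (Dt k : Pt n → ℝ) : Prop where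
  met : IsMetricOn U g'
  smooth_c : SmoothMul2 U c
  smooth_E : SmoothVF U E
  smooth_e : SmoothVF U e
  smooth_Einv : SmoothVF U Einv
  smooth_Dt : ContDiffOn ℝ (⊤ : ℕ∞) Dt U
  smooth_k : ContDiffOn ℝ (⊤ : ℕ∞) k U
  comm : ∀ t ∈ U, ∀ a i j, c t a i j = c t a j i
  assoc : ∀ t ∈ U, ∀ a x y z, (∑ m, c t a m z * c t m x y) = ∑ m, c t a x m * c t m y z
  unit : ∀ t ∈ U, ∀ a i, (∑ j, c t a j i * e t j) = if a = i then (1 : ℝ) else 0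
  invar : ∀ t ∈ U, ∀ x y z, (∑ m, g' t m z * c t m x y) = ∑ m, g' t x m * c t m y z
  lie_g : ∀ t ∈ U, ∀ i j, lieMet E g' t i j = Dt t * g' t i j
  lie_c : ∀ t ∈ U, ∀ a i j, lieMul E c t a i j = k t * c t a i j
  e_inv : ∀ t ∈ U, ∀ a, (∑ i, ∑ j, c t a i j * E t i * Einv t j) = e t a
  sym_E : ∀ Y Z V : VF n, SmoothVF U Y → SmoothVF U Z → SmoothVF U V → ∀ t ∈ U,
    covMul4 g' c E Y Z V t = covMul4 g' c Y E Z V t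

/-- Weak quasi-homogeneous pencil (h, h̃) with Euler vector field E. -/
structure IsWQH (U : Set (Pt n)) (h h' : Met n) (E : VF n) (D Dt : Pt n → ℝ) : Prop where
  met_h : IsMetricOn U h
  met_h' : IsMetricOn U h'
  compat : Compatible U h h'
  smooth_E : SmoothVF U E
  smooth_D : ContDiffOn ℝ (⊤ : ℕ∞) D U
  smooth_Dt : ContDiffOn ℝ (⊤ : ℕ∞) Dt U
  lie_h' : ∀ t ∈ U, ∀ i j, lieMet E h' t i j = Dt t * h' t i j
  cov_E : ∀ X : VF n, SmoothVF U X → ∀ t ∈ U, ∀ a, covV h X E t a = (D t / 2) * X t a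
  diff_const : ∃ c₀ : ℝ, ∀ t ∈ U, Dt t - D t = c₀

/-- Frobenius manifold structure (U, •, g̃, E). -/
structure IsFrob (U : Set (Pt n)) (c : Mul2 n) (g' : Met n) (E e : VF n) (D k : ℝ) : Prop where
  met : IsMetricOn U g'
  flat : FlatOn U g'
  smooth_c : SmoothMul2 U c
  smooth_E : SmoothVF U E
  smooth_e : SmoothVF U e
  comm : ∀ t ∈ U, ∀ a i j, c t a i j = c t a j i
  assoc : ∀ t ∈ U, ∀ a x y z, (∑ m, c t a m z * c t m x y) = ∑ m, c t a x m * c t m y z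
  unit : ∀ t ∈ U, ∀ a i, (∑ j, c t a j i * e t j) = if a = i then (1 : ℝ) else 0
  invar : ∀ t ∈ U, ∀ x y z, (∑ m, g' t m z * c t m x y) = ∑ m, g' t x m * c t m y z
  e_par : ∀ X : VF n, SmoothVF U X → ∀ t ∈ U, ∀ a, covV g' X e t a = 0
  tot_sym : TotSym U g' c
  nabla2E : ∀ X Y : VF n, SmoothVF U X → SmoothVF U Y → ∀ t ∈ U, ∀ a,
    covV g' X (covV g' Y E) t a - covV g' (covV g' X Y) E t a = 0
  lie_g : ∀ t ∈ U, ∀ i j, lieMet E g' t i j = D * g' t i j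
  lie_c : ∀ t ∈ U, ∀ a i j, lieMul E c t a i j = k * c t a i j

/-- The intersection metric `g` of a Frobenius manifold: g*g̃ = E•, together with
its standard properties. -/
structure IsIntersection (U : Set (Pt n)) (c : Mul2 n) (g g' : Met n) (E : VF n)
    (d : ℝ) : Prop where
  met : IsMetricOn U g
  defn : ∀ t ∈ U, ∀ a j, (∑ l, (g t)⁻¹ a l * g' t l j) = ∑ i, c t a i j * E t i
  lie_g : ∀ t ∈ U, ∀ i j, lieMet E g t i j = (1 - d) * g t i j
  compat : Compatible U g g'
  regular : RegularTriple U g g' E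
  mul_eq : ∀ t ∈ U, ∀ a i j, bulMul g g' E t a i j = c t a i j

namespace Stmt7Aux

variable {n : ℕ}

/-! ### pder toolkit -/

theorem pder_congr {t : Pt n} {f f' : Pt n → ℝ} (h : f =ᶠ[nhds t] f') (i : Fin n) :
    pder i f t = pder i f' t := by
  unfold pder; rw [Filter.EventuallyEq.fderiv_eq h]

theorem pder_congrU {U : Set (Pt n)} (hU : IsOpen U) {t : Pt n} (ht : t ∈ U)
    {f f' : Pt n → ℝ} (h : ∀ s ∈ U, f s = f' s) (i : Fin n) : pder i f t = pder i f' t :=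
  pder_congr (Filter.eventuallyEq_of_mem (hU.mem_nhds ht) h) i

theorem pder_const (c : ℝ) (i : Fin n) (t : Pt n) : pder i (fun _ => c) t = 0 := by
  unfold pder; rw [fderiv_fun_const]; rfl

theorem pder_add {t : Pt n} {f g : Pt n → ℝ} (hf : DifferentiableAt ℝ f t)
    (hg : DifferentiableAt ℝ g t) (i : Fin n) :
    pder i (fun s => f s + g s) t = pder i f t + pder i g t := by
  unfold pder; rw [fderiv_fun_add hf hg]; rfl

theorem pder_sub {t : Pt n} {f g : Pt n → ℝ} (hf : DifferentiableAt ℝ f t)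
    (hg : DifferentiableAt ℝ g t) (i : Fin n) :
    pder i (fun s => f s - g s) t = pder i f t - pder i g t := by
  unfold pder; rw [fderiv_fun_sub hf hg]; rfl

theorem pder_mul {t : Pt n} {f g : Pt n → ℝ} (hf : DifferentiableAt ℝ f t)
    (hg : DifferentiableAt ℝ g t) (i : Fin n) :
    pder i (fun s => f s * g s) t = f t * pder i g t + g t * pder i f t := by
  unfold pder; rw [fderiv_fun_mul hf hg]; rfl

theorem pder_cmul {t : Pt n} {f : Pt n → ℝ} (hf : DifferentiableAt ℝ f t) (c : ℝ) (i : Fin n) :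
    pder i (fun s => c * f s) t = c * pder i f t := by
  rw [pder_mul (differentiableAt_const c) hf, pder_const]; ring

theorem pder_sum {t : Pt n} {ι : Type*} (s : Finset ι) {f : ι → Pt n → ℝ}
    (hf : ∀ j ∈ s, DifferentiableAt ℝ (f j) t) (i : Fin n) :
    pder i (fun x => ∑ j ∈ s, f j x) t = ∑ j ∈ s, pder i (f j) t := by
  classical
  induction s using Finset.induction with
  | empty => simpa using pder_const 0 i t
  | @insert a s ha ih =>
      have h1 : DifferentiableAt ℝ (f a) t := hf a (Finset.mem_insert_self a s)
      have h2 : ∀ j ∈ s, DifferentiableAt ℝ (f j) t :=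
        fun j hj => hf j (Finset.mem_insert_of_mem hj)
      have h3 : DifferentiableAt ℝ (fun x => ∑ j ∈ s, f j x) t := by
        apply DifferentiableAt.fun_sum; exact fun j hj => h2 j hj
      have e1 : (fun x => ∑ j ∈ insert a s, f j x) = fun x => f a x + ∑ j ∈ s, f j x := by
        funext x; rw [Finset.sum_insert ha]
      rw [Finset.sum_insert ha, e1, pder_add h1 h3 i, ih h2]

theorem pder_ite {t : Pt n} (P : Prop) [Decidable P] (f g : Pt n → ℝ) (i : Fin n) :
    pder i (fun s => if P then f s else g s) t =
      if P then pder i f t else pder i g t := by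
  by_cases h : P <;> simp [h]

/-! ### smoothness toolkit -/

/-- Abbreviation for smooth real functions on `U`. -/
def SOn (U : Set (Pt n)) (f : Pt n → ℝ) : Prop := ContDiffOn ℝ (⊤ : ℕ∞) f U

theorem SOn.dAt {U : Set (Pt n)} (hU : IsOpen U) {f : Pt n → ℝ} (hf : SOn U f)
    {t : Pt n} (ht : t ∈ U) : DifferentiableAt ℝ f t :=
  ((hf.contDiffAt (hU.mem_nhds ht)).differentiableAt (by simp))

theorem SOn.const {U : Set (Pt n)} (c : ℝ) : SOn U (fun _ => c) := contDiffOn_const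

theorem SOn.add {U : Set (Pt n)} {f g : Pt n → ℝ} (hf : SOn U f) (hg : SOn U g) :
    SOn U (fun s => f s + g s) := ContDiffOn.add hf hg

theorem SOn.sub {U : Set (Pt n)} {f g : Pt n → ℝ} (hf : SOn U f) (hg : SOn U g) :
    SOn U (fun s => f s - g s) := ContDiffOn.sub hf hg

theorem SOn.mul {U : Set (Pt n)} {f g : Pt n → ℝ} (hf : SOn U f) (hg : SOn U g) :
    SOn U (fun s => f s * g s) := ContDiffOn.mul hf hg

theorem SOn.div {U : Set (Pt n)} {f g : Pt n → ℝ} (hf : SOn U f) (hg : SOn U g)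
    (h0 : ∀ s ∈ U, g s ≠ 0) : SOn U (fun s => f s / g s) := ContDiffOn.div hf hg h0

theorem SOn.sum {U : Set (Pt n)} {ι : Type*} (s : Finset ι) {f : ι → Pt n → ℝ}
    (hf : ∀ j ∈ s, SOn U (f j)) : SOn U (fun x => ∑ j ∈ s, f j x) :=
  ContDiffOn.sum hf

theorem SOn.pder {U : Set (Pt n)} (hU : IsOpen U) {f : Pt n → ℝ} (hf : SOn U f) (i : Fin n) :
    SOn U (fun s => pder i f s) := by
  intro t ht
  have h1 : ContDiffAt ℝ (⊤ : ℕ∞) f t := hf.contDiffAt (hU.mem_nhds ht)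
  have h2 : ContDiffAt ℝ (⊤ : ℕ∞) (fderiv ℝ f) t := h1.fderiv_right (by simp)
  have h3 : ContDiffAt ℝ (⊤ : ℕ∞) (fun s => fderiv ℝ f s (Pi.single i 1)) t :=
    h2.clm_apply contDiffAt_const
  exact h3.contDiffWithinAt

theorem SOn.congrU {U : Set (Pt n)} {f f' : Pt n → ℝ} (hf : SOn U f)
    (h : ∀ s ∈ U, f' s = f s) : SOn U f' := ContDiffOn.congr hf h

theorem SOn.prod {U : Set (Pt n)} {ι : Type*} (s : Finset ι) {f : ι → Pt n → ℝ}
    (hf : ∀ j ∈ s, SOn U (f j)) : SOn U (fun x => ∏ j ∈ s, f j x) := by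
  classical
  induction s using Finset.induction with
  | empty => simpa using SOn.const (U := U) 1
  | @insert a s ha ih =>
      have : SOn U (fun x => f a x * ∏ j ∈ s, f j x) :=
        (hf a (Finset.mem_insert_self a s)).mul
          (ih fun j hj => hf j (Finset.mem_insert_of_mem hj))
      exact this.congrU fun x _ => by rw [Finset.prod_insert ha]

theorem SOn.det {U : Set (Pt n)} {M : Met n} (h : ∀ i j, SOn U (fun s => M s i j)) :
    SOn U (fun s => (M s).det) := by
  have : SOn U (fun s => ∑ σ : Equiv.Perm (Fin n),
      ((Equiv.Perm.sign σ : ℤ) : ℝ) * ∏ i, M s (σ i) i) := by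
    apply SOn.sum
    intro σ _
    exact (SOn.const _).mul (SOn.prod _ fun i _ => h (σ i) i)
  exact this.congrU fun s _ => by rw [Matrix.det_apply']

theorem SOn.matinv {U : Set (Pt n)} {M : Met n} (h : ∀ i j, SOn U (fun s => M s i j))
    (hunit : ∀ s ∈ U, IsUnit (M s)) (i j : Fin n) : SOn U (fun s => (M s)⁻¹ i j) := by
  classical
  have hdet : SOn U (fun s => (M s).det) := SOn.det h
  have hd0 : ∀ s ∈ U, (M s).det ≠ 0 := fun s hs => by
    have := (Matrix.isUnit_iff_isUnit_det _).1 (hunit s hs)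
    exact this.ne_zero
  have hadj : SOn U (fun s => (M s).adjugate i j) := by
    have hent : ∀ a b, SOn U (fun s => ((M s).updateRow j (Pi.single i (1:ℝ))) a b) := by
      intro a b
      by_cases haj : a = j
      · refine (SOn.const (if b = i then (1:ℝ) else 0)).congrU fun s _ => ?_
        rw [Matrix.updateRow_apply, if_pos haj, Pi.single_apply]
      · exact (h a b).congrU fun s _ => by rw [Matrix.updateRow_apply, if_neg haj]
    have : SOn U (fun s => ((M s).updateRow j (Pi.single i 1)).det) :=
      SOn.det (M := fun s => (M s).updateRow j (Pi.single i 1)) hent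
    exact this.congrU fun s _ => by rw [Matrix.adjugate_apply]
  have key : SOn U (fun s => ((M s).det)⁻¹ * (M s).adjugate i j) :=
    ((SOn.const 1).div hdet hd0).mul hadj |>.congrU fun s _ => by rw [one_div]
  exact key.congrU fun s _ => by
    rw [Matrix.inv_def, Matrix.smul_apply, Ring.inverse_eq_inv, smul_eq_mul]

end Stmt7Aux
namespace Stmt7Aux

variable {n : ℕ}

/-! ### Kronecker delta and contractions -/

def kd (i j : Fin n) : ℝ := if i = j then 1 else 0

theorem kd_symm (i j : Fin n) : kd i j = kd j i := by
  unfold kd; by_cases h : i = j <;> simp [h, Ne.symm, eq_comm]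

theorem sum_kd_mul (k : Fin n) (f : Fin n → ℝ) : (∑ j, kd k j * f j) = f k := by
  unfold kd
  rw [Finset.sum_congr rfl (fun j _ => by rw [ite_mul, one_mul, zero_mul])]
  simp

theorem sum_mul_kd (k : Fin n) (f : Fin n → ℝ) : (∑ j, f j * kd k j) = f k := by
  rw [Finset.sum_congr rfl (fun j _ => mul_comm (f j) (kd k j))]; exact sum_kd_mul k f

/-- A convenient bundling of the hypotheses on a metric. -/
structure NiceMet (U : Set (Pt n)) (h : Met n) : Prop where
  sm : ∀ i j, SOn U (fun s => h s i j)
  symm : ∀ s ∈ U, (h s).IsSymm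
  unit : ∀ s ∈ U, IsUnit (h s)

theorem NiceMet.detU {U : Set (Pt n)} {h : Met n} (hn : NiceMet U h) {s : Pt n}
    (hs : s ∈ U) : IsUnit (h s).det := (Matrix.isUnit_iff_isUnit_det _).1 (hn.unit s hs)

theorem NiceMet.inv_sm {U : Set (Pt n)} {h : Met n} (hn : NiceMet U h) (i j : Fin n) :
    SOn U (fun s => (h s)⁻¹ i j) := SOn.matinv hn.sm hn.unit i j

theorem NiceMet.entry_symm {U : Set (Pt n)} {h : Met n} (hn : NiceMet U h) {s : Pt n}
    (hs : s ∈ U) (i j : Fin n) : h s i j = h s j i := (hn.symm s hs).apply j i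

theorem NiceMet.inv_symm {U : Set (Pt n)} {h : Met n} (hn : NiceMet U h) {s : Pt n}
    (hs : s ∈ U) (i j : Fin n) : (h s)⁻¹ i j = (h s)⁻¹ j i := by
  have h1 : Matrix.transpose (h s)⁻¹ = (h s)⁻¹ := by
    rw [Matrix.transpose_nonsing_inv, (hn.symm s hs).eq]
  have h2 : (h s)⁻¹ j i = (h s)⁻¹ i j := by
    simpa using congrFun (congrFun h1 i) j
  exact h2.symm

theorem NiceMet.inv_mul {U : Set (Pt n)} {h : Met n} (hn : NiceMet U h) {s : Pt n}
    (hs : s ∈ U) (k b : Fin n) : (∑ j, (h s)⁻¹ k j * h s j b) = kd k b := by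
  have := Matrix.nonsing_inv_mul (h s) (hn.detU hs)
  have e := congrFun (congrFun this k) b
  rw [Matrix.mul_apply] at e
  rw [e, Matrix.one_apply]; rfl

theorem NiceMet.mul_inv {U : Set (Pt n)} {h : Met n} (hn : NiceMet U h) {s : Pt n}
    (hs : s ∈ U) (k b : Fin n) : (∑ j, h s k j * (h s)⁻¹ j b) = kd k b := by
  have := Matrix.mul_nonsing_inv (h s) (hn.detU hs)
  have e := congrFun (congrFun this k) b
  rw [Matrix.mul_apply] at e
  rw [e, Matrix.one_apply]; rfl

/-- Contraction with the metric written with both lower indices in either order. -/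
theorem NiceMet.inv_mul' {U : Set (Pt n)} {h : Met n} (hn : NiceMet U h) {s : Pt n}
    (hs : s ∈ U) (k b : Fin n) : (∑ j, (h s)⁻¹ k j * h s b j) = kd k b := by
  rw [Finset.sum_congr rfl fun j _ => by rw [hn.entry_symm hs b j]]
  exact hn.inv_mul hs k b

/-! ### Curvature-type tensors -/

/-- `T(h)^{km}_i = Σ_j h^{kj} Γ(h)^m_{ij}`. -/
def Tt (h : Met n) (k m i : Fin n) (t : Pt n) : ℝ := ∑ j, (h t)⁻¹ k j * chr h m i j t

/-- Curvature tensor `R(h)^m_{jab}`. -/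
def Rt (h : Met n) (m j a b : Fin n) (t : Pt n) : ℝ :=
  pder a (chr h m b j) t - pder b (chr h m a j) t
    + ∑ x, (chr h m a x t * chr h x b j t - chr h m b x t * chr h x a j t)

/-- `W(h)^{km}_{ab} = Σ_j h^{kj} R(h)^m_{jab}`. -/
def Wt (h : Met n) (k m a b : Fin n) (t : Pt n) : ℝ := ∑ j, (h t)⁻¹ k j * Rt h m j a b t

theorem chr_sm {U : Set (Pt n)} (hU : IsOpen U) {h : Met n} (hn : NiceMet U h)
    (k i j : Fin n) : SOn U (chr h k i j) := by
  have : SOn U (fun t => (1/2 : ℝ) * ∑ l, (h t)⁻¹ k l *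
      (pder i (fun s => h s j l) t + pder j (fun s => h s i l) t
        - pder l (fun s => h s i j) t)) := by
    refine (SOn.const _).mul (SOn.sum _ fun l _ => (hn.inv_sm k l).mul ?_)
    exact (((hn.sm j l).pder hU i).add ((hn.sm i l).pder hU j)).sub ((hn.sm i j).pder hU l)
  exact this.congrU fun t _ => rfl

theorem chr_dAt {U : Set (Pt n)} (hU : IsOpen U) {h : Met n} (hn : NiceMet U h)
    {t : Pt n} (ht : t ∈ U) (k i j : Fin n) : DifferentiableAt ℝ (chr h k i j) t :=
  (chr_sm hU hn k i j).dAt hU ht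

theorem chr_symm {U : Set (Pt n)} (hU : IsOpen U) {h : Met n} (hn : NiceMet U h)
    {t : Pt n} (ht : t ∈ U) (k i j : Fin n) : chr h k i j t = chr h k j i t := by
  unfold chr
  congr 1
  refine Finset.sum_congr rfl fun l _ => ?_
  have e : pder l (fun s => h s i j) t = pder l (fun s => h s j i) t :=
    pder_congrU hU ht (fun s hs => hn.entry_symm hs i j) l
  rw [e]; ring

/-- Lowered Christoffel contraction: `Σ_x h_{jx} Γ^x_{ab} = ½(∂_a h_{bj} + ∂_b h_{aj} - ∂_j h_{ab})`. -/
theorem lowGam {U : Set (Pt n)} (hU : IsOpen U) {h : Met n} (hn : NiceMet U h)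
    {t : Pt n} (ht : t ∈ U) (j a b : Fin n) :
    (∑ x, h t j x * chr h x a b t) =
      1/2 * (pder a (fun s => h s b j) t + pder b (fun s => h s a j) t
        - pder j (fun s => h s a b) t) := by
  unfold chr
  have e1 : ∀ x, h t j x * ((1/2 : ℝ) * ∑ l, (h t)⁻¹ x l *
      (pder a (fun s => h s b l) t + pder b (fun s => h s a l) t
        - pder l (fun s => h s a b) t)) =
      ∑ l, h t j x * (h t)⁻¹ x l * ((1/2 : ℝ) *
      (pder a (fun s => h s b l) t + pder b (fun s => h s a l) t
        - pder l (fun s => h s a b) t)) := by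
    intro x
    simp only [Finset.mul_sum]
    exact Finset.sum_congr rfl fun l _ => by ring
  rw [Finset.sum_congr rfl fun x _ => e1 x, Finset.sum_comm]
  have e2 : ∀ l, (∑ x, h t j x * (h t)⁻¹ x l * ((1/2 : ℝ) *
      (pder a (fun s => h s b l) t + pder b (fun s => h s a l) t
        - pder l (fun s => h s a b) t))) =
      kd j l * ((1/2 : ℝ) * (pder a (fun s => h s b l) t + pder b (fun s => h s a l) t
        - pder l (fun s => h s a b) t)) := by
    intro l
    rw [← Finset.sum_mul, hn.mul_inv ht j l]
  rw [Finset.sum_congr rfl fun l _ => e2 l, sum_kd_mul]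

/-- Metricity: `∂_a h_{bj} = Σ_x h_{jx} Γ^x_{ab} + Σ_x h_{bx} Γ^x_{aj}`. -/
theorem metricity {U : Set (Pt n)} (hU : IsOpen U) {h : Met n} (hn : NiceMet U h)
    {t : Pt n} (ht : t ∈ U) (a b j : Fin n) :
    pder a (fun s => h s b j) t =
      (∑ x, h t j x * chr h x a b t) + ∑ x, h t b x * chr h x a j t := by
  rw [lowGam hU hn ht j a b, lowGam hU hn ht b a j]
  have e1 : pder a (fun s => h s j b) t = pder a (fun s => h s b j) t :=
    pder_congrU hU ht (fun s hs => hn.entry_symm hs j b) a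
  have e2 : pder j (fun s => h s a b) t = pder j (fun s => h s b a) t :=
    pder_congrU hU ht (fun s hs => hn.entry_symm hs a b) j
  have e3 : pder b (fun s => h s a j) t = pder b (fun s => h s j a) t :=
    pder_congrU hU ht (fun s hs => hn.entry_symm hs a j) b
  rw [e1, e2, e3]
  ring

end Stmt7Aux
namespace Stmt7Aux

variable {n : ℕ}

theorem sum_kd_mul' (k : Fin n) (f : Fin n → ℝ) : (∑ j, kd j k * f j) = f k := by
  rw [Finset.sum_congr rfl fun j _ => by rw [kd_symm]]; exact sum_kd_mul k f

theorem sum_mul_kd' (k : Fin n) (f : Fin n → ℝ) : (∑ j, f j * kd j k) = f k := by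
  rw [Finset.sum_congr rfl fun j _ => by rw [kd_symm]]; exact sum_mul_kd k f

/-- The constant coordinate vector field / 1-form. -/
def cvf (i : Fin n) : VF n := fun _ => Pi.single i 1

theorem cvf_apply (i : Fin n) (t : Pt n) (j : Fin n) : cvf i t j = kd j i := by
  unfold cvf kd; rw [Pi.single_apply]

theorem cvf_smooth {U : Set (Pt n)} (i : Fin n) : SmoothVF U (cvf i) :=
  fun _ => contDiffOn_const

theorem pder_cvf (i k : Fin n) (l : Fin n) (t : Pt n) :
    pder l (fun s => cvf i s k) t = 0 := pder_const _ l t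

/-- `∇_{e_b} Z` for a constant 1-form/vector `Z = e_j`. -/
theorem covV_cvf (h : Met n) (Z : VF n) (j : Fin n) (s : Pt n) (k : Fin n) :
    covV h Z (cvf j) s k = ∑ b, Z s b * chr h k b j s := by
  unfold covV
  refine Finset.sum_congr rfl fun b _ => ?_
  rw [pder_cvf]
  rw [Finset.sum_congr rfl fun x (_ : x ∈ Finset.univ) => by rw [cvf_apply]]
  rw [sum_mul_kd']
  ring

theorem vbr_cvf (a b : Fin n) (s : Pt n) (k : Fin n) : vbr (cvf a) (cvf b) s k = 0 := by
  unfold vbr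
  rw [Finset.sum_congr rfl fun i (_ : i ∈ Finset.univ) => by
    rw [pder_cvf, pder_cvf, mul_zero, mul_zero, sub_zero]]
  exact Finset.sum_const_zero

theorem curvV_consts (h : Met n) (t : Pt n) (a b j m : Fin n) :
    curvV h (cvf a) (cvf b) (cvf j) t m = Rt h m j a b t := by
  unfold curvV
  have hC : covV h (vbr (cvf a) (cvf b)) (cvf j) t m = 0 := by
    rw [covV_cvf]
    rw [Finset.sum_congr rfl fun x (_ : x ∈ Finset.univ) => by
      rw [vbr_cvf, zero_mul]]
    exact Finset.sum_const_zero
  have key : ∀ p q : Fin n,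
      covV h (cvf p) (covV h (cvf q) (cvf j)) t m
        = pder p (chr h m q j) t + ∑ x, chr h m p x t * chr h x q j t := by
    intro p q
    have e0 : (fun s => covV h (cvf q) (cvf j) s m) = chr h m q j := by
      funext s
      rw [covV_cvf]
      rw [Finset.sum_congr rfl fun x (_ : x ∈ Finset.univ) => by rw [cvf_apply]]
      exact sum_kd_mul' q _
    have e1 : ∀ x, covV h (cvf q) (cvf j) t x = chr h x q j t := by
      intro x
      rw [covV_cvf]
      rw [Finset.sum_congr rfl fun y (_ : y ∈ Finset.univ) => by rw [cvf_apply]]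
      exact sum_kd_mul' q _
    have expand : covV h (cvf p) (covV h (cvf q) (cvf j)) t m
        = ∑ i, cvf p t i * (pder i (fun s => covV h (cvf q) (cvf j) s m) t
            + ∑ x, chr h m i x t * covV h (cvf q) (cvf j) t x) := rfl
    rw [expand, e0]
    rw [Finset.sum_congr rfl fun i (_ : i ∈ Finset.univ) => by
      rw [cvf_apply, Finset.sum_congr rfl fun x (_ : x ∈ Finset.univ) => by rw [e1 x]]]
    exact sum_kd_mul' p _
  rw [hC, key a b, key b a]
  unfold Rt
  rw [Finset.sum_sub_distrib]
  ring

theorem curvF_consts (h : Met n) (t : Pt n) (m a b k' : Fin n) :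
    curvF h (cvf a) (cvf b) (cvf m) t k' = - Rt h m k' a b t := by
  unfold curvF
  have : ∀ x, curvV h (cvf a) (cvf b) (fun _ => Pi.single k' 1) t x
      = Rt h x k' a b t := fun x => curvV_consts h t a b k' x
  rw [Finset.sum_congr rfl fun x (_ : x ∈ Finset.univ) => by
    rw [this x, cvf_apply]]
  rw [sum_kd_mul']

theorem mup_curvF_cvf (h : Met n) (t : Pt n) (k m a b : Fin n) :
    mup h (curvF h (cvf a) (cvf b) (cvf m)) t k = - Wt h k m a b t := by
  unfold mup Wt
  rw [Finset.sum_congr rfl fun j (_ : j ∈ Finset.univ) => by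
    rw [curvF_consts h t m a b j]]
  rw [← Finset.sum_neg_distrib]
  exact Finset.sum_congr rfl fun j _ => by ring

theorem covF_cvf (h : Met n) (t : Pt n) (i m k : Fin n) :
    covF h (cvf i) (cvf m) t k = - chr h m i k t := by
  unfold covF
  rw [Finset.sum_congr rfl fun x (_ : x ∈ Finset.univ) => by
    rw [cvf_apply, pder_cvf,
      Finset.sum_congr rfl fun y (_ : y ∈ Finset.univ) => by rw [cvf_apply],
      sum_mul_kd' m (fun y => chr h y x k t)]]
  rw [Finset.sum_congr rfl fun x (_ : x ∈ Finset.univ) =>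
    (by ring : kd x i * (0 - chr h m x k t) = kd x i * (- chr h m x k t))]
  exact sum_kd_mul' i _

theorem mup_covF_cvf (h : Met n) (t : Pt n) (k m i : Fin n) :
    mup h (covF h (cvf i) (cvf m)) t k = - Tt h k m i t := by
  unfold mup Tt
  rw [Finset.sum_congr rfl fun j (_ : j ∈ Finset.univ) => by
    rw [covF_cvf h t i m j]]
  rw [← Finset.sum_neg_distrib]
  exact Finset.sum_congr rfl fun j _ => by ring

/-! ### Extraction of tensor additivity from compatibility -/

theorem almost_extract {U : Set (Pt n)} {g g' : Met n}
    (hac : AlmostCompatible U g g') (lam : ℝ)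
    (hinv : ∀ t ∈ U, IsUnit ((g t)⁻¹ + lam • (g' t)⁻¹)) {t : Pt n} (ht : t ∈ U)
    (k m i : Fin n) :
    Tt (pencil g g' lam) k m i t = Tt g k m i t + lam * Tt g' k m i t := by
  have := hac lam hinv (cvf i) (cvf_smooth i) (cvf m) (cvf_smooth m) t ht k
  rw [mup_covF_cvf, mup_covF_cvf, mup_covF_cvf] at this
  linarith

theorem compat_extract {U : Set (Pt n)} {g g' : Met n}
    (hc : Compatible U g g') (lam : ℝ)
    (hinv : ∀ t ∈ U, IsUnit ((g t)⁻¹ + lam • (g' t)⁻¹)) {t : Pt n} (ht : t ∈ U)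
    (k m a b : Fin n) :
    Wt (pencil g g' lam) k m a b t = Wt g k m a b t + lam * Wt g' k m a b t := by
  have := hc.2 lam hinv (cvf a) (cvf b) (cvf_smooth a) (cvf_smooth b)
    (cvf m) (cvf_smooth m) t ht k
  rw [mup_curvF_cvf, mup_curvF_cvf, mup_curvF_cvf] at this
  linarith

end Stmt7Aux
namespace Stmt7Aux

variable {n : ℕ}

/-! ### Sum-reordering helpers -/

theorem sum2_congr {f g : Fin n → Fin n → ℝ} (h : ∀ a b, f a b = g a b) :
    (∑ a, ∑ b, f a b) = ∑ a, ∑ b, g a b :=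
  Finset.sum_congr rfl fun a _ => Finset.sum_congr rfl fun b _ => h a b

theorem sum3_congr {f g : Fin n → Fin n → Fin n → ℝ} (h : ∀ a b c, f a b c = g a b c) :
    (∑ a, ∑ b, ∑ c, f a b c) = ∑ a, ∑ b, ∑ c, g a b c :=
  Finset.sum_congr rfl fun a _ => Finset.sum_congr rfl fun b _ =>
    Finset.sum_congr rfl fun c _ => h a b c

theorem sum2_swap (f : Fin n → Fin n → ℝ) :
    (∑ a, ∑ b, f a b) = ∑ b, ∑ a, f a b := Finset.sum_comm

theorem sum3_rot (f : Fin n → Fin n → Fin n → ℝ) :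
    (∑ a, ∑ b, ∑ c, f a b c) = ∑ b, ∑ c, ∑ a, f a b c :=
  (Finset.sum_comm).trans (Finset.sum_congr rfl fun _ _ => Finset.sum_comm)

theorem sum3_swap12 (f : Fin n → Fin n → Fin n → ℝ) :
    (∑ a, ∑ b, ∑ c, f a b c) = ∑ b, ∑ a, ∑ c, f a b c := Finset.sum_comm

theorem sum3_swap23 (f : Fin n → Fin n → Fin n → ℝ) :
    (∑ a, ∑ b, ∑ c, f a b c) = ∑ a, ∑ c, ∑ b, f a b c :=
  Finset.sum_congr rfl fun _ _ => Finset.sum_comm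

theorem sum3_swap13 (f : Fin n → Fin n → Fin n → ℝ) :
    (∑ a, ∑ b, ∑ c, f a b c) = ∑ c, ∑ b, ∑ a, f a b c :=
  (sum3_rot f).trans (sum3_swap12 _)

theorem sum3_rot2 (f : Fin n → Fin n → Fin n → ℝ) :
    (∑ a, ∑ b, ∑ c, f a b c) = ∑ c, ∑ a, ∑ b, f a b c :=
  (sum3_rot f).trans (sum3_rot fun b c a => f a b c)

theorem sum2_split {f g : Fin n → Fin n → ℝ} :
    (∑ a, ∑ b, (f a b + g a b)) = (∑ a, ∑ b, f a b) + ∑ a, ∑ b, g a b := by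
  rw [← Finset.sum_add_distrib]
  exact Finset.sum_congr rfl fun a _ => Finset.sum_add_distrib

theorem sum2_split_sub {f g : Fin n → Fin n → ℝ} :
    (∑ a, ∑ b, (f a b - g a b)) = (∑ a, ∑ b, f a b) - ∑ a, ∑ b, g a b := by
  rw [← Finset.sum_sub_distrib]
  exact Finset.sum_congr rfl fun a _ => Finset.sum_sub_distrib _ _

/-! ### Reconstruction: `mup (covF)` and `mup (curvF)` in terms of `Tt` and `Wt` -/

theorem mup_covF_expand (h : Met n) (X α : VF n) (t : Pt n) (k : Fin n) :
    mup h (covF h X α) t k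
      = (∑ j, ∑ i, (h t)⁻¹ k j * (X t i * pder i (fun s => α s j) t))
        - ∑ i, ∑ m, X t i * (α t m * Tt h k m i t) := by
  unfold mup covF Tt
  have e1 : ∀ j, (h t)⁻¹ k j * (∑ i, X t i * (pder i (fun s => α s j) t
        - ∑ m, chr h m i j t * α t m))
      = (∑ i, (h t)⁻¹ k j * (X t i * pder i (fun s => α s j) t))
        - ∑ i, ∑ m, (h t)⁻¹ k j * (X t i * (chr h m i j t * α t m)) := by
    intro j
    rw [Finset.mul_sum, ← Finset.sum_sub_distrib]
    refine Finset.sum_congr rfl fun i _ => ?_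
    rw [show (∑ m, (h t)⁻¹ k j * (X t i * (chr h m i j t * α t m)))
        = (h t)⁻¹ k j * (X t i * ∑ m, chr h m i j t * α t m) by
      rw [Finset.mul_sum, Finset.mul_sum]]
    ring
  rw [Finset.sum_congr rfl fun j (_ : j ∈ Finset.univ) => e1 j, Finset.sum_sub_distrib]
  congr 1
  have e2 : ∀ i m', X t i * (α t m' * ∑ j, (h t)⁻¹ k j * chr h m' i j t)
      = ∑ j, X t i * (α t m' * ((h t)⁻¹ k j * chr h m' i j t)) := by
    intro i m'
    rw [Finset.mul_sum, Finset.mul_sum]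
  rw [sum2_congr e2, sum3_rot]
  exact sum3_congr fun j i m' => by ring

theorem curvV_tensorial {U : Set (Pt n)} (hU : IsOpen U) {h : Met n} (hn : NiceMet U h)
    {X Y : VF n} (hX : SmoothVF U X) (hY : SmoothVF U Y) {t : Pt n} (ht : t ∈ U)
    (j m : Fin n) :
    curvV h X Y (cvf j) t m = ∑ a, ∑ b, X t a * (Y t b * Rt h m j a b t) := by
  classical
  have dX : ∀ b, DifferentiableAt ℝ (fun s => X s b) t := fun b => SOn.dAt hU (hX b) ht
  have dY : ∀ b, DifferentiableAt ℝ (fun s => Y s b) t := fun b => SOn.dAt hU (hY b) ht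
  have dchr : ∀ k i j', DifferentiableAt ℝ (chr h k i j') t :=
    fun k i j' => chr_dAt hU hn ht k i j'
  -- expansion of ∇_V ∇_W e_j
  have main : ∀ (V W : VF n), (∀ b, DifferentiableAt ℝ (fun s => W s b) t) →
      covV h V (covV h W (cvf j)) t m
        = (((∑ i, ∑ b, V t i * (W t b * pder i (chr h m b j) t))
          + ∑ i, ∑ b, V t i * (chr h m b j t * pder i (fun s => W s b) t))
          + ∑ i, ∑ x, ∑ b, V t i * (chr h m i x t * (W t b * chr h x b j t))) := by
    intro V W dW
    have e0 : (fun s => covV h W (cvf j) s m) = fun s => ∑ b, W s b * chr h m b j s := by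
      funext s; exact covV_cvf h W j s m
    have expand : covV h V (covV h W (cvf j)) t m
        = ∑ i, V t i * (pder i (fun s => covV h W (cvf j) s m) t
            + ∑ x, chr h m i x t * covV h W (cvf j) t x) := rfl
    have e1 : ∀ i : Fin n, pder i (fun s => ∑ b, W s b * chr h m b j s) t
        = ∑ b, (W t b * pder i (chr h m b j) t
            + chr h m b j t * pder i (fun s => W s b) t) := by
      intro i
      rw [pder_sum (f := fun b s => W s b * chr h m b j s) Finset.univ (fun b _ => (dW b).mul (dchr m b j)) i]
      exact Finset.sum_congr rfl fun b _ => pder_mul (dW b) (dchr m b j) i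
    have e2 : ∀ x, covV h W (cvf j) t x = ∑ b, W t b * chr h x b j t :=
      fun x => covV_cvf h W j t x
    have e3 : ∀ i : Fin n, V t i * (pder i (fun s => covV h W (cvf j) s m) t
          + ∑ x, chr h m i x t * covV h W (cvf j) t x)
        = ((∑ b, V t i * (W t b * pder i (chr h m b j) t))
            + ∑ b, V t i * (chr h m b j t * pder i (fun s => W s b) t))
          + ∑ x, ∑ b, V t i * (chr h m i x t * (W t b * chr h x b j t)) := by
      intro i
      rw [e0, e1 i]
      rw [Finset.sum_congr rfl fun x (_ : x ∈ Finset.univ) =>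
        (by rw [e2 x, Finset.mul_sum] : chr h m i x t * covV h W (cvf j) t x
          = ∑ b, chr h m i x t * (W t b * chr h x b j t))]
      rw [mul_add]
      congr 1
      · rw [Finset.mul_sum]
        rw [Finset.sum_congr rfl fun b (_ : b ∈ Finset.univ) =>
          (by ring : V t i * (W t b * pder i (chr h m b j) t
              + chr h m b j t * pder i (fun s => W s b) t)
            = V t i * (W t b * pder i (chr h m b j) t)
              + V t i * (chr h m b j t * pder i (fun s => W s b) t))]
        exact Finset.sum_add_distrib
      · rw [Finset.mul_sum]
        refine Finset.sum_congr rfl fun x _ => ?_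
        rw [Finset.mul_sum]
    rw [expand, Finset.sum_congr rfl fun i (_ : i ∈ Finset.univ) => e3 i,
      Finset.sum_add_distrib, Finset.sum_add_distrib]
  -- the bracket term
  have termC : covV h (vbr X Y) (cvf j) t m
      = (∑ i, ∑ b, X t i * (chr h m b j t * pder i (fun s => Y s b) t))
        - ∑ i, ∑ b, Y t i * (chr h m b j t * pder i (fun s => X s b) t) := by
    rw [covV_cvf]
    have e4 : ∀ b, vbr X Y t b * chr h m b j t
        = (∑ i, X t i * (chr h m b j t * pder i (fun s => Y s b) t))
          - ∑ i, Y t i * (chr h m b j t * pder i (fun s => X s b) t) := by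
      intro b
      have : vbr X Y t b * chr h m b j t
          = ∑ i, (X t i * (chr h m b j t * pder i (fun s => Y s b) t)
              - Y t i * (chr h m b j t * pder i (fun s => X s b) t)) := by
        rw [show vbr X Y t b = ∑ i, (X t i * pder i (fun s => Y s b) t
            - Y t i * pder i (fun s => X s b) t) from rfl, Finset.sum_mul]
        exact Finset.sum_congr rfl fun i _ => by ring
      rw [this, Finset.sum_sub_distrib]
    rw [Finset.sum_congr rfl fun b (_ : b ∈ Finset.univ) => e4 b, Finset.sum_sub_distrib]
    congr 1
    · exact sum2_swap _
    · exact sum2_swap _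
  -- index-swapping identities
  have swapA : (∑ i, ∑ b, Y t i * (X t b * pder i (chr h m b j) t))
      = ∑ a, ∑ b, X t a * (Y t b * pder b (chr h m a j) t) :=
    (sum2_swap _).trans (sum2_congr fun a b => by ring)
  have swapC : (∑ i, ∑ x, ∑ b, Y t i * (chr h m i x t * (X t b * chr h x b j t)))
      = ∑ a, ∑ b, ∑ x, X t a * (Y t b * (chr h m b x t * chr h x a j t)) :=
    (sum3_rot2 _).trans (sum3_congr fun a b x => by ring)
  have swapC0 : (∑ i, ∑ x, ∑ b, X t i * (chr h m i x t * (Y t b * chr h x b j t)))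
      = ∑ a, ∑ b, ∑ x, X t a * (Y t b * (chr h m a x t * chr h x b j t)) :=
    (sum3_swap23 _).trans (sum3_congr fun a b x => by ring)
  -- expansion of the right-hand side
  have point : ∀ a b, X t a * (Y t b * Rt h m j a b t)
      = ((X t a * (Y t b * pder a (chr h m b j) t)
          - X t a * (Y t b * pder b (chr h m a j) t))
        + ((∑ x, X t a * (Y t b * (chr h m a x t * chr h x b j t)))
          - ∑ x, X t a * (Y t b * (chr h m b x t * chr h x a j t)))) := by
    intro a b
    have m1 : (∑ x, X t a * (Y t b * (chr h m a x t * chr h x b j t)))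
        = X t a * (Y t b * ∑ x, chr h m a x t * chr h x b j t) := by
      rw [Finset.mul_sum, Finset.mul_sum]
    have m2 : (∑ x, X t a * (Y t b * (chr h m b x t * chr h x a j t)))
        = X t a * (Y t b * ∑ x, chr h m b x t * chr h x a j t) := by
      rw [Finset.mul_sum, Finset.mul_sum]
    rw [m1, m2]
    unfold Rt
    rw [Finset.sum_sub_distrib]
    ring
  have rhs : (∑ a, ∑ b, X t a * (Y t b * Rt h m j a b t))
      = (((∑ a, ∑ b, X t a * (Y t b * pder a (chr h m b j) t))
          - ∑ a, ∑ b, X t a * (Y t b * pder b (chr h m a j) t))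
        + ((∑ a, ∑ b, ∑ x, X t a * (Y t b * (chr h m a x t * chr h x b j t)))
          - ∑ a, ∑ b, ∑ x, X t a * (Y t b * (chr h m b x t * chr h x a j t)))) := by
    rw [sum2_congr point, sum2_split, sum2_split_sub, sum2_split_sub]
  unfold curvV
  rw [main X Y dY, main Y X dX, termC, rhs, swapA, swapC, swapC0]
  ring

theorem mup_curvF_expand {U : Set (Pt n)} (hU : IsOpen U) {h : Met n} (hn : NiceMet U h)
    {X Y : VF n} (hX : SmoothVF U X) (hY : SmoothVF U Y) (α : OneForm n) {t : Pt n}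
    (ht : t ∈ U) (k : Fin n) :
    mup h (curvF h X Y α) t k
      = - ∑ m, ∑ a, ∑ b, α t m * (X t a * (Y t b * Wt h k m a b t)) := by
  have e1 : ∀ j : Fin n, curvF h X Y α t j
      = - ∑ m, ∑ a, ∑ b, α t m * (X t a * (Y t b * Rt h m j a b t)) := by
    intro j
    unfold curvF
    rw [Finset.sum_congr rfl fun m (_ : m ∈ Finset.univ) => by
      rw [show curvV h X Y (fun _ => Pi.single j 1) t m
            = ∑ a, ∑ b, X t a * (Y t b * Rt h m j a b t) from
          curvV_tensorial hU hn hX hY ht j m]]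
    rw [neg_inj.2 (Finset.sum_congr rfl fun m (_ : m ∈ Finset.univ) =>
      (by rw [Finset.mul_sum]; exact Finset.sum_congr rfl fun a _ => by rw [Finset.mul_sum] :
        α t m * (∑ a, ∑ b, X t a * (Y t b * Rt h m j a b t))
          = ∑ a, ∑ b, α t m * (X t a * (Y t b * Rt h m j a b t))))]
  have e2 : mup h (curvF h X Y α) t k
      = ∑ j, (h t)⁻¹ k j * curvF h X Y α t j := rfl
  rw [e2, Finset.sum_congr rfl fun j (_ : j ∈ Finset.univ) =>
    congrArg (fun z => (h t)⁻¹ k j * z) (e1 j)]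
  rw [Finset.sum_congr rfl fun j (_ : j ∈ Finset.univ) =>
    (by rw [mul_neg, Finset.mul_sum]; rw [Finset.sum_congr rfl fun m (_ : m ∈ Finset.univ) =>
        (by rw [Finset.mul_sum]; exact Finset.sum_congr rfl fun a _ => by rw [Finset.mul_sum] :
          (h t)⁻¹ k j * (∑ a, ∑ b, α t m * (X t a * (Y t b * Rt h m j a b t)))
            = ∑ a, ∑ b, (h t)⁻¹ k j * (α t m * (X t a * (Y t b * Rt h m j a b t))))] :
      (h t)⁻¹ k j * (- ∑ m, ∑ a, ∑ b, α t m * (X t a * (Y t b * Rt h m j a b t)))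
        = - ∑ m, ∑ a, ∑ b, (h t)⁻¹ k j * (α t m * (X t a * (Y t b * Rt h m j a b t))))]
  rw [Finset.sum_neg_distrib]
  have key : (∑ j, ∑ m, ∑ a, ∑ b, (h t)⁻¹ k j * (α t m * (X t a * (Y t b * Rt h m j a b t))))
      = ∑ m, ∑ a, ∑ b, α t m * (X t a * (Y t b * Wt h k m a b t)) := by
    rw [Finset.sum_comm]
    refine Finset.sum_congr rfl fun m _ => ?_
    rw [Finset.sum_comm]
    refine Finset.sum_congr rfl fun a _ => ?_
    rw [Finset.sum_comm]
    refine Finset.sum_congr rfl fun b _ => ?_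
    unfold Wt
    rw [Finset.mul_sum, Finset.mul_sum, Finset.mul_sum]
    exact Finset.sum_congr rfl fun j _ => by ring
  exact congrArg Neg.neg key
end Stmt7Aux
namespace Stmt7Aux

variable {n : ℕ}

theorem sum_mul_kdr (x : Fin n) (f : Fin n → ℝ) : (∑ j, f j * kd x j) = f x := by
  rw [Finset.sum_congr rfl fun j _ => by rw [kd_symm x j]]; exact sum_mul_kd' x f

/-! ### Conformal data -/

def psiF (Ω : Pt n → ℝ) (i : Fin n) : Pt n → ℝ := fun s => pder i Ω s / Ω s

def sigF (h : Met n) (Ω : Pt n → ℝ) (m : Fin n) : Pt n → ℝ :=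
  fun s => ∑ l, (h s)⁻¹ m l * psiF Ω l s

def DelF (h : Met n) (Ω : Pt n → ℝ) (k i j : Fin n) : Pt n → ℝ :=
  fun s => kd k i * psiF Ω j s + kd k j * psiF Ω i s - h s i j * sigF h Ω k s

section Conformal

variable {U : Set (Pt n)} {h : Met n} {Ω : Pt n → ℝ}

theorem psi_sm (hU : IsOpen U) (hΩ : SOn U Ω) (hΩ0 : ∀ s ∈ U, Ω s ≠ 0) (i : Fin n) :
    SOn U (psiF Ω i) := (hΩ.pder hU i).div hΩ hΩ0

theorem sig_sm (hU : IsOpen U) (hn : NiceMet U h) (hΩ : SOn U Ω)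
    (hΩ0 : ∀ s ∈ U, Ω s ≠ 0) (m : Fin n) : SOn U (sigF h Ω m) :=
  SOn.sum _ fun l _ => (hn.inv_sm m l).mul (psi_sm hU hΩ hΩ0 l)

theorem Del_sm (hU : IsOpen U) (hn : NiceMet U h) (hΩ : SOn U Ω)
    (hΩ0 : ∀ s ∈ U, Ω s ≠ 0) (k i j : Fin n) : SOn U (DelF h Ω k i j) :=
  (((SOn.const (kd k i)).mul (psi_sm hU hΩ hΩ0 j)).add
    ((SOn.const (kd k j)).mul (psi_sm hU hΩ hΩ0 i))).sub
    ((hn.sm i j).mul (sig_sm hU hn hΩ hΩ0 k))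

theorem smul_entry (s : Pt n) (i j : Fin n) : (Ω s ^ 2 • h s) i j = Ω s ^ 2 * h s i j := rfl

theorem G_nice (hn : NiceMet U h) (hΩ : SOn U Ω) (hΩ0 : ∀ s ∈ U, Ω s ≠ 0) :
    NiceMet U (fun s => Ω s ^ 2 • h s) := by
  refine ⟨fun i j => ?_, fun s hs => ?_, fun s hs => ?_⟩
  · exact ((hΩ.mul hΩ).mul (hn.sm i j)).congrU fun s _ => by
      rw [smul_entry]; ring
  · exact Matrix.IsSymm.ext fun i j => by
      rw [smul_entry, smul_entry, hn.entry_symm hs j i]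
  · rw [Matrix.isUnit_iff_isUnit_det, Matrix.det_smul, isUnit_iff_ne_zero]
    exact mul_ne_zero (pow_ne_zero _ (pow_ne_zero _ (hΩ0 s hs))) (hn.detU hs).ne_zero

theorem G_inv (hn : NiceMet U h) (hΩ0 : ∀ s ∈ U, Ω s ≠ 0) {s : Pt n} (hs : s ∈ U)
    (k l : Fin n) : (Ω s ^ 2 • h s)⁻¹ k l = (Ω s ^ 2)⁻¹ * (h s)⁻¹ k l := by
  have hc : (Ω s ^ 2) ≠ 0 := pow_ne_zero _ (hΩ0 s hs)
  letI := invertibleOfNonzero hc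
  rw [Matrix.inv_smul (k := Ω s ^ 2) (h := hn.detU hs), Matrix.smul_apply, invOf_eq_inv, smul_eq_mul]

theorem pder_G_entry (hU : IsOpen U) (hn : NiceMet U h) (hΩ : SOn U Ω)
    {t : Pt n} (ht : t ∈ U) (i a b : Fin n) :
    pder i (fun s => (Ω s ^ 2 • h s) a b) t
      = 2 * Ω t * pder i Ω t * h t a b + Ω t ^ 2 * pder i (fun s => h s a b) t := by
  have e : (fun s => (Ω s ^ 2 • h s) a b) = fun s => (Ω s * Ω s) * h s a b := by
    funext s; rw [smul_entry]; ring
  rw [e]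
  have dΩ : DifferentiableAt ℝ Ω t := hΩ.dAt hU ht
  have dh : DifferentiableAt ℝ (fun s => h s a b) t := (hn.sm a b).dAt hU ht
  rw [pder_mul (f := fun s => Ω s * Ω s) (dΩ.mul dΩ) dh i, pder_mul dΩ dΩ i]
  ring

/-- Conformal transformation of the Christoffel symbols, on `U`. -/
theorem chr_conf (hU : IsOpen U) (hn : NiceMet U h) (hΩ : SOn U Ω)
    (hΩ0 : ∀ s ∈ U, Ω s ≠ 0) {s : Pt n} (hs : s ∈ U) (k i j : Fin n) :
    chr (fun u => Ω u ^ 2 • h u) k i j s = chr h k i j s + DelF h Ω k i j s := by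
  have hΩs : Ω s ≠ 0 := hΩ0 s hs
  unfold chr DelF
  have e1 : ∀ l, ((fun u => Ω u ^ 2 • h u) s)⁻¹ k l *
      (pder i (fun u => (Ω u ^ 2 • h u) j l) s + pder j (fun u => (Ω u ^ 2 • h u) i l) s
        - pder l (fun u => (Ω u ^ 2 • h u) i j) s)
      = (h s)⁻¹ k l * (pder i (fun u => h u j l) s + pder j (fun u => h u i l) s
          - pder l (fun u => h u i j) s)
        + 2 * (psiF Ω i s * ((h s)⁻¹ k l * h s j l)
          + psiF Ω j s * ((h s)⁻¹ k l * h s i l)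
          - h s i j * ((h s)⁻¹ k l * psiF Ω l s)) := by
    intro l
    rw [show ((fun u => Ω u ^ 2 • h u) s)⁻¹ k l = (Ω s ^ 2)⁻¹ * (h s)⁻¹ k l from
        G_inv hn hΩ0 hs k l,
      pder_G_entry hU hn hΩ hs i j l, pder_G_entry hU hn hΩ hs j i l,
      pder_G_entry hU hn hΩ hs l i j]
    unfold psiF
    field_simp
    ring
  rw [Finset.sum_congr rfl fun l _ => e1 l, Finset.sum_add_distrib, mul_add]
  congr 1
  have e2 : (∑ l, 2 * (psiF Ω i s * ((h s)⁻¹ k l * h s j l)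
      + psiF Ω j s * ((h s)⁻¹ k l * h s i l)
      - h s i j * ((h s)⁻¹ k l * psiF Ω l s)))
      = 2 * (psiF Ω i s * (∑ l, (h s)⁻¹ k l * h s j l)
        + psiF Ω j s * (∑ l, (h s)⁻¹ k l * h s i l)
        - h s i j * (∑ l, (h s)⁻¹ k l * psiF Ω l s)) := by
    rw [Finset.mul_sum, Finset.mul_sum, Finset.mul_sum, ← Finset.sum_add_distrib,
      ← Finset.sum_sub_distrib, Finset.mul_sum]
  rw [e2, hn.inv_mul' hs k j, hn.inv_mul' hs k i,
    show (∑ l, (h s)⁻¹ k l * psiF Ω l s) = sigF h Ω k s from rfl]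
  ring

/-- Contraction of `h⁻¹` with `DelF`. -/
theorem sum_H_Del (hn : NiceMet U h) {t : Pt n} (ht : t ∈ U) (k x b : Fin n) :
    (∑ j, (h t)⁻¹ k j * DelF h Ω x b j t)
      = kd x b * sigF h Ω k t + psiF Ω b t * (h t)⁻¹ k x - kd k b * sigF h Ω x t := by
  unfold DelF
  have e : ∀ j, (h t)⁻¹ k j * (kd x b * psiF Ω j t + kd x j * psiF Ω b t
        - h t b j * sigF h Ω x t)
      = (kd x b * ((h t)⁻¹ k j * psiF Ω j t)
          + (psiF Ω b t * (h t)⁻¹ k j) * kd j x)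
        - sigF h Ω x t * ((h t)⁻¹ k j * h t b j) := by
    intro j; rw [kd_symm j x]; ring
  rw [Finset.sum_congr rfl fun j _ => e j, Finset.sum_sub_distrib, Finset.sum_add_distrib,
    ← Finset.mul_sum, sum_mul_kd' x _, ← Finset.mul_sum, hn.inv_mul' ht k b,
    show (∑ j, (h t)⁻¹ k j * psiF Ω j t) = sigF h Ω k t from rfl]
  ring

/-- Conformal transformation of `Tt`. -/
theorem Tt_conf (hU : IsOpen U) (hn : NiceMet U h) (hΩ : SOn U Ω)
    (hΩ0 : ∀ s ∈ U, Ω s ≠ 0) {t : Pt n} (ht : t ∈ U) (k m i : Fin n) :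
    Tt (fun s => Ω s ^ 2 • h s) k m i t
      = (Ω t ^ 2)⁻¹ * (Tt h k m i t
        + (kd m i * sigF h Ω k t + psiF Ω i t * (h t)⁻¹ k m - kd k i * sigF h Ω m t)) := by
  unfold Tt
  have e1 : ∀ j, ((fun s => Ω s ^ 2 • h s) t)⁻¹ k j
        * chr (fun s => Ω s ^ 2 • h s) m i j t
      = (Ω t ^ 2)⁻¹ * ((h t)⁻¹ k j * chr h m i j t + (h t)⁻¹ k j * DelF h Ω m i j t) := by
    intro j
    rw [show ((fun s => Ω s ^ 2 • h s) t)⁻¹ k j = (Ω t ^ 2)⁻¹ * (h t)⁻¹ k j from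
        G_inv hn hΩ0 ht k j,
      chr_conf hU hn hΩ hΩ0 ht m i j]
    ring
  rw [Finset.sum_congr rfl fun j _ => e1 j, ← Finset.mul_sum, Finset.sum_add_distrib,
    sum_H_Del hn ht k m i]

end Conformal
end Stmt7Aux
namespace Stmt7Aux

variable {n : ℕ}

section Monster

variable {U : Set (Pt n)} {h : Met n} {Ω : Pt n → ℝ}

/-- `Σ_x Γ^m_{cx} σ^x = Σ_l ψ_l T^{lm}_c`. -/
theorem sum_chr_sig (hn : NiceMet U h) {t : Pt n} (ht : t ∈ U) (m c : Fin n) :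
    (∑ x, chr h m c x t * sigF h Ω x t) = ∑ l, psiF Ω l t * Tt h l m c t := by
  have e1 : ∀ x, chr h m c x t * sigF h Ω x t
      = ∑ l, chr h m c x t * ((h t)⁻¹ x l * psiF Ω l t) := by
    intro x
    rw [show sigF h Ω x t = ∑ l, (h t)⁻¹ x l * psiF Ω l t from rfl, Finset.mul_sum]
  rw [Finset.sum_congr rfl fun x _ => e1 x, sum2_swap]
  refine Finset.sum_congr rfl fun l _ => ?_
  rw [show Tt h l m c t = ∑ x, (h t)⁻¹ l x * chr h m c x t from rfl, Finset.mul_sum]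
  refine Finset.sum_congr rfl fun x _ => ?_
  rw [hn.inv_symm ht x l]
  ring

/-- `Σ_x h_{cx} σ^x = ψ_c`. -/
theorem hsig (hn : NiceMet U h) {t : Pt n} (ht : t ∈ U) (c : Fin n) :
    (∑ x, h t c x * sigF h Ω x t) = psiF Ω c t := by
  have e1 : ∀ x, h t c x * sigF h Ω x t
      = ∑ l, (h t c x * (h t)⁻¹ x l) * psiF Ω l t := by
    intro x
    rw [show sigF h Ω x t = ∑ l, (h t)⁻¹ x l * psiF Ω l t from rfl, Finset.mul_sum]
    exact Finset.sum_congr rfl fun l _ => by ring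
  rw [Finset.sum_congr rfl fun x _ => e1 x, sum2_swap]
  have e2 : ∀ l, (∑ x, (h t c x * (h t)⁻¹ x l) * psiF Ω l t)
      = kd c l * psiF Ω l t := by
    intro l
    rw [← Finset.sum_mul, hn.mul_inv ht c l]
  rw [Finset.sum_congr rfl fun l _ => e2 l, sum_kd_mul]

/-- `Σ_x Δ^m_{cx} σ^x = δ_{mc} (ψ·σ)`. -/
theorem sum_Del_sig (hn : NiceMet U h) {t : Pt n} (ht : t ∈ U) (m c : Fin n) :
    (∑ x, DelF h Ω m c x t * sigF h Ω x t)
      = kd m c * ∑ x, psiF Ω x t * sigF h Ω x t := by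
  have e : ∀ x, DelF h Ω m c x t * sigF h Ω x t
      = kd m c * (psiF Ω x t * sigF h Ω x t)
        + (psiF Ω c t * sigF h Ω x t) * kd x m
        - sigF h Ω m t * (h t c x * sigF h Ω x t) := by
    intro x
    rw [show DelF h Ω m c x t = kd m c * psiF Ω x t + kd m x * psiF Ω c t
        - h t c x * sigF h Ω m t from rfl, kd_symm m x]
    ring
  rw [Finset.sum_congr rfl fun x _ => e x, Finset.sum_sub_distrib, Finset.sum_add_distrib,
    ← Finset.mul_sum, sum_mul_kd' m _, ← Finset.mul_sum, hsig hn ht c]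
  ring

/-- Derivative of `DelF`. -/
theorem pderDel (hU : IsOpen U) (hn : NiceMet U h) (hΩ : SOn U Ω)
    (hΩ0 : ∀ s ∈ U, Ω s ≠ 0) {t : Pt n} (ht : t ∈ U) (c x y j' : Fin n) :
    pder c (DelF h Ω x y j') t
      = kd x y * pder c (psiF Ω j') t + kd x j' * pder c (psiF Ω y) t
        - (h t y j' * pder c (sigF h Ω x) t
            + sigF h Ω x t * pder c (fun s => h s y j') t) := by
  have dp1 : DifferentiableAt ℝ (fun s => kd x y * psiF Ω j' s) t :=
    (SOn.dAt hU ((SOn.const (kd x y)).mul (psi_sm hU hΩ hΩ0 j')) ht)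
  have dp2 : DifferentiableAt ℝ (fun s => kd x j' * psiF Ω y s) t :=
    (SOn.dAt hU ((SOn.const (kd x j')).mul (psi_sm hU hΩ hΩ0 y)) ht)
  have dh : DifferentiableAt ℝ (fun s => h s y j') t := (hn.sm y j').dAt hU ht
  have dsg : DifferentiableAt ℝ (sigF h Ω x) t := (sig_sm hU hn hΩ hΩ0 x).dAt hU ht
  have e : pder c (DelF h Ω x y j') t
      = pder c (fun s => kd x y * psiF Ω j' s + kd x j' * psiF Ω y s) t
        - pder c (fun s => h s y j' * sigF h Ω x s) t :=
    pder_sub (dp1.add dp2) (dh.mul dsg) c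
  rw [e, pder_add dp1 dp2 c, pder_cmul ((psi_sm hU hΩ hΩ0 j').dAt hU ht) _ c,
    pder_cmul ((psi_sm hU hΩ hΩ0 y).dAt hU ht) _ c, pder_mul dh dsg c]

/-- Piece P1. -/
theorem P1lem (hU : IsOpen U) (hn : NiceMet U h) (hΩ : SOn U Ω)
    (hΩ0 : ∀ s ∈ U, Ω s ≠ 0) {t : Pt n} (ht : t ∈ U) (k m c d : Fin n) :
    (∑ j, (h t)⁻¹ k j * pder c (DelF h Ω m d j) t)
      = kd m d * (∑ j, (h t)⁻¹ k j * pder c (psiF Ω j) t)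
        + (h t)⁻¹ k m * pder c (psiF Ω d) t
        - sigF h Ω m t * (∑ j, (h t)⁻¹ k j * pder c (fun s => h s d j) t)
        - kd k d * pder c (sigF h Ω m) t := by
  have e : ∀ j, (h t)⁻¹ k j * pder c (DelF h Ω m d j) t
      = kd m d * ((h t)⁻¹ k j * pder c (psiF Ω j) t)
        + ((h t)⁻¹ k j * pder c (psiF Ω d) t) * kd j m
        - (sigF h Ω m t * ((h t)⁻¹ k j * pder c (fun s => h s d j) t)
            + ((h t)⁻¹ k j * h t d j) * pder c (sigF h Ω m) t) := by
    intro j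
    rw [pderDel hU hn hΩ hΩ0 ht c m d j, kd_symm m j]
    ring
  rw [Finset.sum_congr rfl fun j _ => e j, Finset.sum_sub_distrib, Finset.sum_add_distrib,
    Finset.sum_add_distrib, ← Finset.mul_sum, sum_mul_kd' m _, ← Finset.mul_sum,
    ← Finset.sum_mul, hn.inv_mul' ht k d]
  ring

/-- Piece Q2. -/
theorem Q2lem (hn : NiceMet U h) {t : Pt n} (ht : t ∈ U) (k m c d : Fin n) :
    (∑ j, ∑ x, (h t)⁻¹ k j * (chr h m c x t * DelF h Ω x d j t))
      = chr h m c d t * sigF h Ω k t + psiF Ω d t * Tt h k m c t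
        - kd k d * ∑ l, psiF Ω l t * Tt h l m c t := by
  rw [sum2_swap]
  have e1 : ∀ x, (∑ j, (h t)⁻¹ k j * (chr h m c x t * DelF h Ω x d j t))
      = (chr h m c x t * sigF h Ω k t) * kd x d
        + psiF Ω d t * ((h t)⁻¹ k x * chr h m c x t)
        - kd k d * (chr h m c x t * sigF h Ω x t) := by
    intro x
    rw [Finset.sum_congr rfl fun j _ =>
        (by ring : (h t)⁻¹ k j * (chr h m c x t * DelF h Ω x d j t)
          = chr h m c x t * ((h t)⁻¹ k j * DelF h Ω x d j t)),
      ← Finset.mul_sum, sum_H_Del hn ht k x d]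
    ring
  rw [Finset.sum_congr rfl fun x _ => e1 x, Finset.sum_sub_distrib, Finset.sum_add_distrib,
    sum_mul_kd' d _, ← Finset.mul_sum, ← Finset.mul_sum, sum_chr_sig hn ht m c,
    show (∑ x, (h t)⁻¹ k x * chr h m c x t) = Tt h k m c t from rfl]

/-- Piece Q3. -/
theorem Q3lem (hn : NiceMet U h) {t : Pt n} (ht : t ∈ U) (k m c d : Fin n) :
    (∑ j, ∑ x, (h t)⁻¹ k j * (DelF h Ω m c x t * chr h x d j t))
      = kd m c * (∑ x, psiF Ω x t * Tt h k x d t) + psiF Ω c t * Tt h k m d t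
        - sigF h Ω m t * ∑ x, h t c x * Tt h k x d t := by
  rw [sum2_swap]
  have e1 : ∀ x, (∑ j, (h t)⁻¹ k j * (DelF h Ω m c x t * chr h x d j t))
      = DelF h Ω m c x t * Tt h k x d t := by
    intro x
    rw [Finset.sum_congr rfl fun j _ =>
        (by ring : (h t)⁻¹ k j * (DelF h Ω m c x t * chr h x d j t)
          = DelF h Ω m c x t * ((h t)⁻¹ k j * chr h x d j t)),
      ← Finset.mul_sum,
      show (∑ j, (h t)⁻¹ k j * chr h x d j t) = Tt h k x d t from rfl]
  rw [Finset.sum_congr rfl fun x _ => e1 x]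
  have e2 : ∀ x, DelF h Ω m c x t * Tt h k x d t
      = kd m c * (psiF Ω x t * Tt h k x d t)
        + (psiF Ω c t * Tt h k x d t) * kd x m
        - sigF h Ω m t * (h t c x * Tt h k x d t) := by
    intro x
    rw [show DelF h Ω m c x t = kd m c * psiF Ω x t + kd m x * psiF Ω c t
        - h t c x * sigF h Ω m t from rfl, kd_symm m x]
    ring
  rw [Finset.sum_congr rfl fun x _ => e2 x, Finset.sum_sub_distrib, Finset.sum_add_distrib,
    ← Finset.mul_sum, sum_mul_kd' m _, ← Finset.mul_sum]

/-- Piece Q4. -/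
theorem Q4lem (hn : NiceMet U h) {t : Pt n} (ht : t ∈ U) (k m c d : Fin n) :
    (∑ j, ∑ x, (h t)⁻¹ k j * (DelF h Ω m c x t * DelF h Ω x d j t))
      = sigF h Ω k t * DelF h Ω m c d t
        + psiF Ω d t * (kd m c * sigF h Ω k t + psiF Ω c t * (h t)⁻¹ k m
            - kd k c * sigF h Ω m t)
        - kd k d * (kd m c * ∑ x, psiF Ω x t * sigF h Ω x t) := by
  rw [sum2_swap]
  have e1 : ∀ x, (∑ j, (h t)⁻¹ k j * (DelF h Ω m c x t * DelF h Ω x d j t))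
      = (sigF h Ω k t * DelF h Ω m c x t) * kd x d
        + psiF Ω d t * (DelF h Ω m c x t * (h t)⁻¹ k x)
        - kd k d * (DelF h Ω m c x t * sigF h Ω x t) := by
    intro x
    rw [Finset.sum_congr rfl fun j _ =>
        (by ring : (h t)⁻¹ k j * (DelF h Ω m c x t * DelF h Ω x d j t)
          = DelF h Ω m c x t * ((h t)⁻¹ k j * DelF h Ω x d j t)),
      ← Finset.mul_sum, sum_H_Del hn ht k x d]
    ring
  rw [Finset.sum_congr rfl fun x _ => e1 x, Finset.sum_sub_distrib, Finset.sum_add_distrib,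
    sum_mul_kd' d _, ← Finset.mul_sum, ← Finset.mul_sum, sum_Del_sig hn ht m c,
    Finset.sum_congr rfl fun x _ =>
      (by ring : DelF h Ω m c x t * (h t)⁻¹ k x = (h t)⁻¹ k x * DelF h Ω m c x t),
    sum_H_Del hn ht k m c]

/-- The cancellation identity. -/
theorem CLlem (hU : IsOpen U) (hn : NiceMet U h) {t : Pt n} (ht : t ∈ U) (k a b : Fin n) :
    (∑ j, (h t)⁻¹ k j * pder a (fun s => h s b j) t) + (∑ x, h t a x * Tt h k x b t)
      = (∑ j, (h t)⁻¹ k j * pder b (fun s => h s a j) t)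
        + ∑ x, h t b x * Tt h k x a t := by
  have eM : ∀ (c d : Fin n), (∑ x, h t c x * Tt h k x d t)
      = ∑ j, (h t)⁻¹ k j * (1/2 * (pder d (fun s => h s j c) t
          + pder j (fun s => h s d c) t - pder c (fun s => h s d j) t)) := by
    intro c d
    have e0 : ∀ x, h t c x * Tt h k x d t
        = ∑ j, (h t)⁻¹ k j * (h t c x * chr h x d j t) := by
      intro x
      rw [show Tt h k x d t = ∑ j, (h t)⁻¹ k j * chr h x d j t from rfl, Finset.mul_sum]
      exact Finset.sum_congr rfl fun j _ => by ring
    rw [Finset.sum_congr rfl fun x _ => e0 x, sum2_swap]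
    refine Finset.sum_congr rfl fun j _ => ?_
    rw [← Finset.mul_sum, lowGam hU hn ht c d j]
  rw [eM a b, eM b a, ← Finset.sum_add_distrib, ← Finset.sum_add_distrib]
  refine Finset.sum_congr rfl fun j _ => ?_
  have s1 : pder b (fun s => h s j a) t = pder b (fun s => h s a j) t :=
    pder_congrU hU ht (fun s hs => hn.entry_symm hs j a) b
  have s2 : pder j (fun s => h s b a) t = pder j (fun s => h s a b) t :=
    pder_congrU hU ht (fun s hs => hn.entry_symm hs b a) j
  have s3 : pder a (fun s => h s j b) t = pder a (fun s => h s b j) t :=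
    pder_congrU hU ht (fun s hs => hn.entry_symm hs j b) a
  rw [s1, s2, s3]
  ring

end Monster
end Stmt7Aux
namespace Stmt7Aux

variable {n : ℕ}

section Monster2

variable {U : Set (Pt n)} {h : Met n} {Ω : Pt n → ℝ}

/-- Conformal transformation of the curvature `Rt`. -/
theorem Rt_conf (hU : IsOpen U) (hn : NiceMet U h) (hΩ : SOn U Ω)
    (hΩ0 : ∀ s ∈ U, Ω s ≠ 0) {t : Pt n} (ht : t ∈ U) (m j' a b : Fin n) :
    Rt (fun s => Ω s ^ 2 • h s) m j' a b t
      = Rt h m j' a b t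
        + ((pder a (DelF h Ω m b j') t - pder b (DelF h Ω m a j') t)
          + ∑ x, ((chr h m a x t * DelF h Ω x b j' t + DelF h Ω m a x t * chr h x b j' t
              + DelF h Ω m a x t * DelF h Ω x b j' t)
            - (chr h m b x t * DelF h Ω x a j' t + DelF h Ω m b x t * chr h x a j' t
              + DelF h Ω m b x t * DelF h Ω x a j' t))) := by
  have dchr' : ∀ (p q r : Fin n), DifferentiableAt ℝ (chr h p q r) t :=
    fun p q r => chr_dAt hU hn ht p q r
  have dDel : ∀ (p q r : Fin n), DifferentiableAt ℝ (DelF h Ω p q r) t :=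
    fun p q r => (Del_sm hU hn hΩ hΩ0 p q r).dAt hU ht
  have p1 : ∀ (c x y z : Fin n), pder c (chr (fun s => Ω s ^ 2 • h s) x y z) t
      = pder c (chr h x y z) t + pder c (DelF h Ω x y z) t := by
    intro c x y z
    rw [pder_congrU hU ht (fun s hs => chr_conf hU hn hΩ hΩ0 hs x y z) c]
    exact pder_add (dchr' x y z) (dDel x y z) c
  unfold Rt
  rw [p1 a m b j', p1 b m a j']
  rw [Finset.sum_congr rfl fun x (_ : x ∈ Finset.univ) => by
    rw [chr_conf hU hn hΩ hΩ0 ht m a x, chr_conf hU hn hΩ hΩ0 ht x b j',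
      chr_conf hU hn hΩ hΩ0 ht m b x, chr_conf hU hn hΩ hΩ0 ht x a j']]
  have split : ∀ x : Fin n,
      ((chr h m a x t + DelF h Ω m a x t) * (chr h x b j' t + DelF h Ω x b j' t)
        - (chr h m b x t + DelF h Ω m b x t) * (chr h x a j' t + DelF h Ω x a j' t))
      = (chr h m a x t * chr h x b j' t - chr h m b x t * chr h x a j' t)
        + ((chr h m a x t * DelF h Ω x b j' t + DelF h Ω m a x t * chr h x b j' t
            + DelF h Ω m a x t * DelF h Ω x b j' t)
          - (chr h m b x t * DelF h Ω x a j' t + DelF h Ω m b x t * chr h x a j' t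
            + DelF h Ω m b x t * DelF h Ω x a j' t)) := fun x => by ring
  rw [Finset.sum_congr rfl fun x _ => split x, Finset.sum_add_distrib]
  ring

/-- THE MONSTER: conformal transformation of `Wt`. -/
theorem Wt_conf (hU : IsOpen U) (hn : NiceMet U h) (hΩ : SOn U Ω)
    (hΩ0 : ∀ s ∈ U, Ω s ≠ 0) {t : Pt n} (ht : t ∈ U) (k m a b : Fin n) :
    Wt (fun s => Ω s ^ 2 • h s) k m a b t
      = (Ω t ^ 2)⁻¹ * (Wt h k m a b t
        + (kd m b * (∑ j, (h t)⁻¹ k j * pder a (psiF Ω j) t)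
            - kd m a * (∑ j, (h t)⁻¹ k j * pder b (psiF Ω j) t)
          + (h t)⁻¹ k m * (pder a (psiF Ω b) t - pder b (psiF Ω a) t)
          - kd k b * pder a (sigF h Ω m) t + kd k a * pder b (sigF h Ω m) t
          - kd k b * (∑ l, psiF Ω l t * Tt h l m a t)
          + kd k a * (∑ l, psiF Ω l t * Tt h l m b t)
          + kd m a * (∑ x, psiF Ω x t * Tt h k x b t)
          - kd m b * (∑ x, psiF Ω x t * Tt h k x a t)
          + kd m a * (psiF Ω b t * sigF h Ω k t) - kd m b * (psiF Ω a t * sigF h Ω k t)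
          - (kd m a * kd k b - kd m b * kd k a) * (∑ x, psiF Ω x t * sigF h Ω x t)
          + psiF Ω a t * sigF h Ω m t * kd k b - psiF Ω b t * sigF h Ω m t * kd k a)) := by
  have step1 : Wt (fun s => Ω s ^ 2 • h s) k m a b t
      = (Ω t ^ 2)⁻¹ * ∑ j', (h t)⁻¹ k j' * Rt (fun s => Ω s ^ 2 • h s) m j' a b t := by
    rw [show Wt (fun s => Ω s ^ 2 • h s) k m a b t
        = ∑ j', ((fun s => Ω s ^ 2 • h s) t)⁻¹ k j'
            * Rt (fun s => Ω s ^ 2 • h s) m j' a b t from rfl,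
      Finset.mul_sum]
    refine Finset.sum_congr rfl fun j' _ => ?_
    rw [show ((fun s => Ω s ^ 2 • h s) t)⁻¹ k j' = (Ω t ^ 2)⁻¹ * (h t)⁻¹ k j' from
      G_inv hn hΩ0 ht k j']
    ring
  rw [step1]
  congr 1
  -- expand Rt of the rescaled metric
  rw [Finset.sum_congr rfl fun j' (_ : j' ∈ Finset.univ) => by
    rw [Rt_conf hU hn hΩ hΩ0 ht m j' a b]]
  have e2 : ∀ j', (h t)⁻¹ k j' * (Rt h m j' a b t
        + ((pder a (DelF h Ω m b j') t - pder b (DelF h Ω m a j') t)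
          + ∑ x, ((chr h m a x t * DelF h Ω x b j' t + DelF h Ω m a x t * chr h x b j' t
              + DelF h Ω m a x t * DelF h Ω x b j' t)
            - (chr h m b x t * DelF h Ω x a j' t + DelF h Ω m b x t * chr h x a j' t
              + DelF h Ω m b x t * DelF h Ω x a j' t))))
      = (h t)⁻¹ k j' * Rt h m j' a b t
        + ((h t)⁻¹ k j' * pder a (DelF h Ω m b j') t
            - (h t)⁻¹ k j' * pder b (DelF h Ω m a j') t)
        + (∑ x, (((h t)⁻¹ k j' * (chr h m a x t * DelF h Ω x b j' t)
              + (h t)⁻¹ k j' * (DelF h Ω m a x t * chr h x b j' t))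
              + (h t)⁻¹ k j' * (DelF h Ω m a x t * DelF h Ω x b j' t))
          - ∑ x, (((h t)⁻¹ k j' * (chr h m b x t * DelF h Ω x a j' t)
              + (h t)⁻¹ k j' * (DelF h Ω m b x t * chr h x a j' t))
              + (h t)⁻¹ k j' * (DelF h Ω m b x t * DelF h Ω x a j' t))) := by
    intro j'
    rw [show (∑ x, (((h t)⁻¹ k j' * (chr h m a x t * DelF h Ω x b j' t)
              + (h t)⁻¹ k j' * (DelF h Ω m a x t * chr h x b j' t))
              + (h t)⁻¹ k j' * (DelF h Ω m a x t * DelF h Ω x b j' t)))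
        = (h t)⁻¹ k j' * ∑ x, (chr h m a x t * DelF h Ω x b j' t
            + DelF h Ω m a x t * chr h x b j' t
            + DelF h Ω m a x t * DelF h Ω x b j' t) by
      rw [Finset.mul_sum]; exact Finset.sum_congr rfl fun x _ => by ring]
    rw [show (∑ x, (((h t)⁻¹ k j' * (chr h m b x t * DelF h Ω x a j' t)
              + (h t)⁻¹ k j' * (DelF h Ω m b x t * chr h x a j' t))
              + (h t)⁻¹ k j' * (DelF h Ω m b x t * DelF h Ω x a j' t)))
        = (h t)⁻¹ k j' * ∑ x, (chr h m b x t * DelF h Ω x a j' t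
            + DelF h Ω m b x t * chr h x a j' t
            + DelF h Ω m b x t * DelF h Ω x a j' t) by
      rw [Finset.mul_sum]; exact Finset.sum_congr rfl fun x _ => by ring]
    rw [show (∑ x, ((chr h m a x t * DelF h Ω x b j' t + DelF h Ω m a x t * chr h x b j' t
              + DelF h Ω m a x t * DelF h Ω x b j' t)
            - (chr h m b x t * DelF h Ω x a j' t + DelF h Ω m b x t * chr h x a j' t
              + DelF h Ω m b x t * DelF h Ω x a j' t)))
        = (∑ x, (chr h m a x t * DelF h Ω x b j' t + DelF h Ω m a x t * chr h x b j' t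
              + DelF h Ω m a x t * DelF h Ω x b j' t))
          - ∑ x, (chr h m b x t * DelF h Ω x a j' t + DelF h Ω m b x t * chr h x a j' t
              + DelF h Ω m b x t * DelF h Ω x a j' t) from Finset.sum_sub_distrib _ _]
    ring
  rw [Finset.sum_congr rfl fun j' _ => e2 j']
  rw [Finset.sum_add_distrib, Finset.sum_add_distrib, Finset.sum_sub_distrib,
    Finset.sum_sub_distrib]
  -- split the double sums
  have dsplit : ∀ (c d : Fin n), (∑ j', ∑ x, (((h t)⁻¹ k j' * (chr h m c x t * DelF h Ω x d j' t)
          + (h t)⁻¹ k j' * (DelF h Ω m c x t * chr h x d j' t))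
          + (h t)⁻¹ k j' * (DelF h Ω m c x t * DelF h Ω x d j' t)))
      = ((∑ j', ∑ x, (h t)⁻¹ k j' * (chr h m c x t * DelF h Ω x d j' t))
          + ∑ j', ∑ x, (h t)⁻¹ k j' * (DelF h Ω m c x t * chr h x d j' t))
        + ∑ j', ∑ x, (h t)⁻¹ k j' * (DelF h Ω m c x t * DelF h Ω x d j' t) := by
    intro c d
    rw [← sum2_split, ← sum2_split]
  rw [dsplit a b, dsplit b a]
  rw [P1lem hU hn hΩ hΩ0 ht k m a b, P1lem hU hn hΩ hΩ0 ht k m b a,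
    Q2lem hn ht k m a b, Q2lem hn ht k m b a,
    Q3lem hn ht k m a b, Q3lem hn ht k m b a,
    Q4lem hn ht k m a b, Q4lem hn ht k m b a]
  rw [show Wt h k m a b t = ∑ j', (h t)⁻¹ k j' * Rt h m j' a b t from rfl]
  rw [show DelF h Ω m a b t = kd m a * psiF Ω b t + kd m b * psiF Ω a t
      - h t a b * sigF h Ω m t from rfl,
    show DelF h Ω m b a t = kd m b * psiF Ω a t + kd m a * psiF Ω b t
      - h t b a * sigF h Ω m t from rfl]
  rw [chr_symm hU hn ht m b a, hn.entry_symm ht b a]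
  linear_combination (-(sigF h Ω m t)) * CLlem hU hn ht k a b

end Monster2
end Stmt7Aux
namespace Stmt7Aux

variable {n : ℕ}

section Loc

variable {U : Set (Pt n)} (hU : IsOpen U)

include hU

theorem chr_loc {h₁ h₂ : Met n} (heq : ∀ s ∈ U, h₁ s = h₂ s) {s : Pt n} (hs : s ∈ U)
    (k i j : Fin n) : chr h₁ k i j s = chr h₂ k i j s := by
  unfold chr
  have e2 : ∀ (c p q : Fin n), pder c (fun u => h₁ u p q) s = pder c (fun u => h₂ u p q) s :=
    fun c p q => pder_congrU hU hs (fun u hu => by rw [heq u hu]) c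
  rw [heq s hs]
  exact congrArg _ (Finset.sum_congr rfl fun l _ => by rw [e2 i j l, e2 j i l, e2 l i j])

theorem Tt_loc {h₁ h₂ : Met n} (heq : ∀ s ∈ U, h₁ s = h₂ s) {t : Pt n} (ht : t ∈ U)
    (k m i : Fin n) : Tt h₁ k m i t = Tt h₂ k m i t := by
  unfold Tt
  rw [heq t ht]
  exact Finset.sum_congr rfl fun j _ => by rw [chr_loc hU heq ht m i j]

theorem Rt_loc {h₁ h₂ : Met n} (heq : ∀ s ∈ U, h₁ s = h₂ s) {t : Pt n} (ht : t ∈ U)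
    (m j a b : Fin n) : Rt h₁ m j a b t = Rt h₂ m j a b t := by
  unfold Rt
  have e : ∀ (c x y z : Fin n), pder c (chr h₁ x y z) t = pder c (chr h₂ x y z) t :=
    fun c x y z => pder_congrU hU ht (fun s hs => chr_loc hU heq hs x y z) c
  rw [e a m b j, e b m a j]
  exact congrArg _ (Finset.sum_congr rfl fun x _ => by
    rw [chr_loc hU heq ht m a x, chr_loc hU heq ht x b j, chr_loc hU heq ht m b x,
      chr_loc hU heq ht x a j])

theorem Wt_loc {h₁ h₂ : Met n} (heq : ∀ s ∈ U, h₁ s = h₂ s) {t : Pt n} (ht : t ∈ U)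
    (k m a b : Fin n) : Wt h₁ k m a b t = Wt h₂ k m a b t := by
  unfold Wt
  rw [heq t ht]
  exact Finset.sum_congr rfl fun j _ => by rw [Rt_loc hU heq ht m j a b]

theorem nice_loc {h₁ h₂ : Met n} (heq : ∀ s ∈ U, h₁ s = h₂ s) (hn : NiceMet U h₁) :
    NiceMet U h₂ := by
  refine ⟨fun i j => (hn.sm i j).congrU fun s hs => by rw [heq s hs], fun s hs => ?_,
    fun s hs => ?_⟩
  · rw [← heq s hs]; exact hn.symm s hs
  · rw [← heq s hs]; exact hn.unit s hs

end Loc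

section Pencil

variable {U : Set (Pt n)} (hU : IsOpen U) {g g' : Met n} {lam : ℝ}

theorem pencil_def (s : Pt n) : pencil g g' lam s = ((g s)⁻¹ + lam • (g' s)⁻¹)⁻¹ := rfl

theorem M_entry (s : Pt n) (i j : Fin n) :
    ((g s)⁻¹ + lam • (g' s)⁻¹) i j = (g s)⁻¹ i j + lam * (g' s)⁻¹ i j := rfl

theorem M_nice (hng : NiceMet U g) (hng' : NiceMet U g')
    (hinvM : ∀ s ∈ U, IsUnit ((g s)⁻¹ + lam • (g' s)⁻¹)) :
    NiceMet U (fun s => (g s)⁻¹ + lam • (g' s)⁻¹) := by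
  refine ⟨fun i j => ?_, fun s hs => ?_, fun s hs => hinvM s hs⟩
  · exact ((hng.inv_sm i j).add ((SOn.const lam).mul (hng'.inv_sm i j))).congrU
      fun s _ => by rw [M_entry]
  · exact Matrix.IsSymm.ext fun i j => by
      rw [M_entry, M_entry, hng.inv_symm hs j i, hng'.inv_symm hs j i]

theorem pencil_nice (hng : NiceMet U g) (hng' : NiceMet U g')
    (hinvM : ∀ s ∈ U, IsUnit ((g s)⁻¹ + lam • (g' s)⁻¹)) :
    NiceMet U (pencil g g' lam) := by
  have hM := M_nice hng hng' hinvM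
  refine ⟨fun i j => SOn.matinv hM.sm hM.unit i j, fun s hs => ?_, fun s hs => ?_⟩
  · have : Matrix.transpose (pencil g g' lam s) = pencil g g' lam s := by
      rw [pencil_def, Matrix.transpose_nonsing_inv, (hM.symm s hs).eq]
    exact this
  · rw [pencil_def, Matrix.isUnit_nonsing_inv_iff]
    exact hinvM s hs

theorem pencil_inv (hng : NiceMet U g) (hng' : NiceMet U g')
    (hinvM : ∀ s ∈ U, IsUnit ((g s)⁻¹ + lam • (g' s)⁻¹)) {s : Pt n} (hs : s ∈ U) :
    (pencil g g' lam s)⁻¹ = (g s)⁻¹ + lam • (g' s)⁻¹ := by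
  rw [pencil_def]
  exact Matrix.nonsing_inv_nonsing_inv _ ((M_nice hng hng' hinvM).detU hs)

theorem pencil_inv_entry (hng : NiceMet U g) (hng' : NiceMet U g')
    (hinvM : ∀ s ∈ U, IsUnit ((g s)⁻¹ + lam • (g' s)⁻¹)) {s : Pt n} (hs : s ∈ U)
    (i j : Fin n) :
    (pencil g g' lam s)⁻¹ i j = (g s)⁻¹ i j + lam * (g' s)⁻¹ i j := by
  rw [pencil_inv hng hng' hinvM hs, M_entry]

end Pencil
end Stmt7Aux
namespace Stmt7Aux

variable {n : ℕ}

theorem sum_add_smul (lam : ℝ) (f g : Fin n → ℝ) :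
    (∑ j, (f j + lam * g j)) = (∑ j, f j) + lam * ∑ j, g j := by
  rw [Finset.sum_add_distrib, Finset.mul_sum]

theorem sum2_add_smul (lam : ℝ) (f g : Fin n → Fin n → ℝ) :
    (∑ a, ∑ b, (f a b + lam * g a b)) = (∑ a, ∑ b, f a b) + lam * ∑ a, ∑ b, g a b := by
  rw [Finset.sum_congr rfl fun a (_ : a ∈ Finset.univ) => sum_add_smul lam (f a) (g a)]
  exact sum_add_smul lam _ _

theorem sum3_add_smul (lam : ℝ) (f g : Fin n → Fin n → Fin n → ℝ) :
    (∑ a, ∑ b, ∑ c, (f a b c + lam * g a b c))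
      = (∑ a, ∑ b, ∑ c, f a b c) + lam * ∑ a, ∑ b, ∑ c, g a b c := by
  rw [Finset.sum_congr rfl fun a (_ : a ∈ Finset.univ) => sum2_add_smul lam (f a) (g a)]
  exact sum_add_smul lam _ _

section Assemble

variable {U : Set (Pt n)} {g g' : Met n} {Ω : Pt n → ℝ} {lam : ℝ}

theorem G_inv_mat (hn : NiceMet U g) (hΩ0 : ∀ s ∈ U, Ω s ≠ 0) {s : Pt n} (hs : s ∈ U) :
    (Ω s ^ 2 • g s)⁻¹ = (Ω s ^ 2)⁻¹ • (g s)⁻¹ := by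
  ext i j
  rw [G_inv hn hΩ0 hs i j]
  rfl

theorem unit_translate (hng : NiceMet U g) (hng' : NiceMet U g')
    (hΩ0 : ∀ s ∈ U, Ω s ≠ 0) {s : Pt n} (hs : s ∈ U)
    (hu : IsUnit ((Ω s ^ 2 • g s)⁻¹ + lam • (Ω s ^ 2 • g' s)⁻¹)) :
    IsUnit ((g s)⁻¹ + lam • (g' s)⁻¹) := by
  have e : (Ω s ^ 2 • g s)⁻¹ + lam • (Ω s ^ 2 • g' s)⁻¹
      = (Ω s ^ 2)⁻¹ • ((g s)⁻¹ + lam • (g' s)⁻¹) := by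
    rw [G_inv_mat hng hΩ0 hs, G_inv_mat hng' hΩ0 hs, smul_add, smul_comm lam]
  rw [e] at hu
  rw [Matrix.isUnit_iff_isUnit_det] at hu ⊢
  rw [Matrix.det_smul, isUnit_iff_ne_zero] at hu
  rw [isUnit_iff_ne_zero]
  exact fun h0 => hu (by rw [h0, mul_zero])

theorem scaled_pencil (hng : NiceMet U g) (hng' : NiceMet U g')
    (hΩ0 : ∀ s ∈ U, Ω s ≠ 0)
    (hinvM : ∀ s ∈ U, IsUnit ((g s)⁻¹ + lam • (g' s)⁻¹)) {s : Pt n} (hs : s ∈ U) :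
    pencil (fun u => Ω u ^ 2 • g u) (fun u => Ω u ^ 2 • g' u) lam s
      = Ω s ^ 2 • pencil g g' lam s := by
  have hc : ((Ω s ^ 2)⁻¹ : ℝ) ≠ 0 := inv_ne_zero (pow_ne_zero _ (hΩ0 s hs))
  have e : ((fun u => Ω u ^ 2 • g u) s)⁻¹ + lam • ((fun u => Ω u ^ 2 • g' u) s)⁻¹
      = (Ω s ^ 2)⁻¹ • ((g s)⁻¹ + lam • (g' s)⁻¹) := by
    rw [show ((fun u => Ω u ^ 2 • g u) s) = Ω s ^ 2 • g s from rfl,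
      show ((fun u => Ω u ^ 2 • g' u) s) = Ω s ^ 2 • g' s from rfl,
      G_inv_mat hng hΩ0 hs, G_inv_mat hng' hΩ0 hs, smul_add, smul_comm lam]
  rw [pencil_def, e]
  letI := invertibleOfNonzero hc
  rw [Matrix.inv_smul (k := (Ω s ^ 2)⁻¹) (h := (M_nice hng hng' hinvM).detU hs),
    invOf_eq_inv, inv_inv, pencil_def]

theorem sig_add (hng : NiceMet U g) (hng' : NiceMet U g')
    (hinvM : ∀ s ∈ U, IsUnit ((g s)⁻¹ + lam • (g' s)⁻¹)) {s : Pt n} (hs : s ∈ U)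
    (k : Fin n) :
    sigF (pencil g g' lam) Ω k s = sigF g Ω k s + lam * sigF g' Ω k s := by
  unfold sigF
  rw [Finset.sum_congr rfl fun l (_ : l ∈ Finset.univ) =>
    (by rw [pencil_inv_entry hng hng' hinvM hs k l]; ring :
      (pencil g g' lam s)⁻¹ k l * psiF Ω l s
        = (g s)⁻¹ k l * psiF Ω l s + lam * ((g' s)⁻¹ k l * psiF Ω l s))]
  exact sum_add_smul lam _ _

theorem pder_sig_add (hU : IsOpen U) (hng : NiceMet U g) (hng' : NiceMet U g')
    (hΩ : SOn U Ω) (hΩ0 : ∀ s ∈ U, Ω s ≠ 0)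
    (hinvM : ∀ s ∈ U, IsUnit ((g s)⁻¹ + lam • (g' s)⁻¹)) {t : Pt n} (ht : t ∈ U)
    (c m : Fin n) :
    pder c (sigF (pencil g g' lam) Ω m) t
      = pder c (sigF g Ω m) t + lam * pder c (sigF g' Ω m) t := by
  have d1 : DifferentiableAt ℝ (sigF g Ω m) t := (sig_sm hU hng hΩ hΩ0 m).dAt hU ht
  have d2 : DifferentiableAt ℝ (fun s => lam * sigF g' Ω m s) t :=
    ((SOn.const lam).mul (sig_sm hU hng' hΩ hΩ0 m)).dAt hU ht
  rw [pder_congrU hU ht (fun s hs => sig_add hng hng' hinvM hs m) c,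
    pder_add d1 d2 c, pder_cmul ((sig_sm hU hng' hΩ hΩ0 m).dAt hU ht) lam c]

end Assemble
end Stmt7Aux
namespace Stmt7Aux

variable {n : ℕ}

section Final

variable {U : Set (Pt n)} {g g' : Met n} {Ω : Pt n → ℝ}

theorem final_almost (hU : IsOpen U) (hng : NiceMet U g) (hng' : NiceMet U g')
    (hΩ : SOn U Ω) (hΩ0 : ∀ s ∈ U, Ω s ≠ 0) (hac : AlmostCompatible U g g') :
    AlmostCompatible U (fun t => Ω t ^ 2 • g t) (fun t => Ω t ^ 2 • g' t) := by
  intro lam hinv X hX α hα t ht k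
  have hinvM : ∀ s ∈ U, IsUnit ((g s)⁻¹ + lam • (g' s)⁻¹) :=
    fun s hs => unit_translate hng hng' hΩ0 hs (hinv s hs)
  have hnp : NiceMet U (pencil g g' lam) := pencil_nice hng hng' hinvM
  have heqP : ∀ s ∈ U, pencil (fun u => Ω u ^ 2 • g u) (fun u => Ω u ^ 2 • g' u) lam s
      = Ω s ^ 2 • pencil g g' lam s := fun s hs => scaled_pencil hng hng' hΩ0 hinvM hs
  have f1 : ∀ j : Fin n,
      (pencil (fun u => Ω u ^ 2 • g u) (fun u => Ω u ^ 2 • g' u) lam t)⁻¹ k j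
        = (Ω t ^ 2 • g t)⁻¹ k j + lam * (Ω t ^ 2 • g' t)⁻¹ k j := by
    intro j
    rw [heqP t ht, G_inv hnp hΩ0 ht k j, pencil_inv_entry hng hng' hinvM ht k j,
      G_inv hng hΩ0 ht k j, G_inv hng' hΩ0 ht k j]
    ring
  have f2 : ∀ m i : Fin n,
      Tt (pencil (fun u => Ω u ^ 2 • g u) (fun u => Ω u ^ 2 • g' u) lam) k m i t
        = Tt (fun u => Ω u ^ 2 • g u) k m i t
          + lam * Tt (fun u => Ω u ^ 2 • g' u) k m i t := by
    intro m i
    rw [Tt_loc hU heqP ht k m i, Tt_conf hU hnp hΩ hΩ0 ht k m i,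
      Tt_conf hU hng hΩ hΩ0 ht k m i, Tt_conf hU hng' hΩ hΩ0 ht k m i,
      almost_extract hac lam hinvM ht k m i, sig_add hng hng' hinvM ht k,
      sig_add hng hng' hinvM ht m, pencil_inv_entry hng hng' hinvM ht k m]
    ring
  rw [mup_covF_expand (pencil (fun u => Ω u ^ 2 • g u) (fun u => Ω u ^ 2 • g' u) lam) X α t k,
    mup_covF_expand (fun u => Ω u ^ 2 • g u) X α t k,
    mup_covF_expand (fun u => Ω u ^ 2 • g' u) X α t k]
  have t1 : (∑ j, ∑ i,
      (pencil (fun u => Ω u ^ 2 • g u) (fun u => Ω u ^ 2 • g' u) lam t)⁻¹ k j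
        * (X t i * pder i (fun s => α s j) t))
      = (∑ j, ∑ i, (Ω t ^ 2 • g t)⁻¹ k j * (X t i * pder i (fun s => α s j) t))
        + lam * ∑ j, ∑ i, (Ω t ^ 2 • g' t)⁻¹ k j * (X t i * pder i (fun s => α s j) t) := by
    rw [sum2_congr (fun j i => by rw [f1 j]; ring :
      ∀ j i, (pencil (fun u => Ω u ^ 2 • g u) (fun u => Ω u ^ 2 • g' u) lam t)⁻¹ k j
          * (X t i * pder i (fun s => α s j) t)
        = (Ω t ^ 2 • g t)⁻¹ k j * (X t i * pder i (fun s => α s j) t)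
          + lam * ((Ω t ^ 2 • g' t)⁻¹ k j * (X t i * pder i (fun s => α s j) t)))]
    exact sum2_add_smul lam _ _
  have t2 : (∑ i, ∑ m, X t i * (α t m
        * Tt (pencil (fun u => Ω u ^ 2 • g u) (fun u => Ω u ^ 2 • g' u) lam) k m i t))
      = (∑ i, ∑ m, X t i * (α t m * Tt (fun u => Ω u ^ 2 • g u) k m i t))
        + lam * ∑ i, ∑ m, X t i * (α t m * Tt (fun u => Ω u ^ 2 • g' u) k m i t) := by
    rw [sum2_congr (fun i m => by rw [f2 m i]; ring :
      ∀ i m, X t i * (α t m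
          * Tt (pencil (fun u => Ω u ^ 2 • g u) (fun u => Ω u ^ 2 • g' u) lam) k m i t)
        = X t i * (α t m * Tt (fun u => Ω u ^ 2 • g u) k m i t)
          + lam * (X t i * (α t m * Tt (fun u => Ω u ^ 2 • g' u) k m i t)))]
    exact sum2_add_smul lam _ _
  rw [t1, t2]
  ring

end Final
end Stmt7Aux
namespace Stmt7Aux

variable {n : ℕ}

section Final2

variable {U : Set (Pt n)} {g g' : Met n} {Ω : Pt n → ℝ}

theorem final_compat (hU : IsOpen U) (hng : NiceMet U g) (hng' : NiceMet U g')
    (hΩ : SOn U Ω) (hΩ0 : ∀ s ∈ U, Ω s ≠ 0) (hc : Compatible U g g')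
    (lam : ℝ)
    (hinv : ∀ t ∈ U, IsUnit (((fun t => Ω t ^ 2 • g t) t)⁻¹
      + lam • ((fun t => Ω t ^ 2 • g' t) t)⁻¹))
    (X Y : VF n) (hX : SmoothVF U X) (hY : SmoothVF U Y)
    (α : OneForm n) (hα : SmoothVF U α) {t : Pt n} (ht : t ∈ U) (k : Fin n) :
    mup (pencil (fun t => Ω t ^ 2 • g t) (fun t => Ω t ^ 2 • g' t) lam)
        (curvF (pencil (fun t => Ω t ^ 2 • g t) (fun t => Ω t ^ 2 • g' t) lam) X Y α) t k
      = mup (fun t => Ω t ^ 2 • g t)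
          (curvF (fun t => Ω t ^ 2 • g t) X Y α) t k
        + lam * mup (fun t => Ω t ^ 2 • g' t)
            (curvF (fun t => Ω t ^ 2 • g' t) X Y α) t k := by
  have hinvM : ∀ s ∈ U, IsUnit ((g s)⁻¹ + lam • (g' s)⁻¹) :=
    fun s hs => unit_translate hng hng' hΩ0 hs (hinv s hs)
  have hnp : NiceMet U (pencil g g' lam) := pencil_nice hng hng' hinvM
  have heqP : ∀ s ∈ U, pencil (fun u => Ω u ^ 2 • g u) (fun u => Ω u ^ 2 • g' u) lam s
      = Ω s ^ 2 • pencil g g' lam s := fun s hs => scaled_pencil hng hng' hΩ0 hinvM hs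
  have hnP : NiceMet U (pencil (fun u => Ω u ^ 2 • g u) (fun u => Ω u ^ 2 • g' u) lam) :=
    nice_loc hU (fun s hs => (heqP s hs).symm) (G_nice hnp hΩ hΩ0)
  have hnG : NiceMet U (fun u => Ω u ^ 2 • g u) := G_nice hng hΩ hΩ0
  have hnG' : NiceMet U (fun u => Ω u ^ 2 • g' u) := G_nice hng' hΩ hΩ0
  -- additivity of Wt for the rescaled pencil
  have f2W : ∀ m a b : Fin n,
      Wt (pencil (fun u => Ω u ^ 2 • g u) (fun u => Ω u ^ 2 • g' u) lam) k m a b t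
        = Wt (fun u => Ω u ^ 2 • g u) k m a b t
          + lam * Wt (fun u => Ω u ^ 2 • g' u) k m a b t := by
    intro m a b
    have hAA : ∀ c : Fin n, (∑ j, (pencil g g' lam t)⁻¹ k j * pder c (psiF Ω j) t)
        = (∑ j, (g t)⁻¹ k j * pder c (psiF Ω j) t)
          + lam * ∑ j, (g' t)⁻¹ k j * pder c (psiF Ω j) t := by
      intro c
      rw [Finset.sum_congr rfl fun j (_ : j ∈ Finset.univ) =>
        (by rw [pencil_inv_entry hng hng' hinvM ht k j]; ring :
          (pencil g g' lam t)⁻¹ k j * pder c (psiF Ω j) t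
            = (g t)⁻¹ k j * pder c (psiF Ω j) t
              + lam * ((g' t)⁻¹ k j * pder c (psiF Ω j) t))]
      exact sum_add_smul lam _ _
    have hCC : ∀ m' c : Fin n, (∑ l, psiF Ω l t * Tt (pencil g g' lam) l m' c t)
        = (∑ l, psiF Ω l t * Tt g l m' c t)
          + lam * ∑ l, psiF Ω l t * Tt g' l m' c t := by
      intro m' c
      rw [Finset.sum_congr rfl fun l (_ : l ∈ Finset.univ) =>
        (by rw [almost_extract hc.1 lam hinvM ht l m' c]; ring :
          psiF Ω l t * Tt (pencil g g' lam) l m' c t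
            = psiF Ω l t * Tt g l m' c t + lam * (psiF Ω l t * Tt g' l m' c t))]
      exact sum_add_smul lam _ _
    have hDD : ∀ d : Fin n, (∑ x, psiF Ω x t * Tt (pencil g g' lam) k x d t)
        = (∑ x, psiF Ω x t * Tt g k x d t)
          + lam * ∑ x, psiF Ω x t * Tt g' k x d t := by
      intro d
      rw [Finset.sum_congr rfl fun x (_ : x ∈ Finset.univ) =>
        (by rw [almost_extract hc.1 lam hinvM ht k x d]; ring :
          psiF Ω x t * Tt (pencil g g' lam) k x d t
            = psiF Ω x t * Tt g k x d t + lam * (psiF Ω x t * Tt g' k x d t))]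
      exact sum_add_smul lam _ _
    have hPDS : (∑ x, psiF Ω x t * sigF (pencil g g' lam) Ω x t)
        = (∑ x, psiF Ω x t * sigF g Ω x t)
          + lam * ∑ x, psiF Ω x t * sigF g' Ω x t := by
      rw [Finset.sum_congr rfl fun x (_ : x ∈ Finset.univ) =>
        (by rw [sig_add hng hng' hinvM ht x]; ring :
          psiF Ω x t * sigF (pencil g g' lam) Ω x t
            = psiF Ω x t * sigF g Ω x t + lam * (psiF Ω x t * sigF g' Ω x t))]
      exact sum_add_smul lam _ _
    rw [Wt_loc hU heqP ht k m a b,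
      Wt_conf hU hnp hΩ hΩ0 ht k m a b,
      Wt_conf hU hng hΩ hΩ0 ht k m a b,
      Wt_conf hU hng' hΩ hΩ0 ht k m a b,
      compat_extract hc lam hinvM ht k m a b,
      hAA a, hAA b, hCC m a, hCC m b, hDD a, hDD b, hPDS,
      pencil_inv_entry hng hng' hinvM ht k m,
      pder_sig_add hU hng hng' hΩ hΩ0 hinvM ht a m,
      pder_sig_add hU hng hng' hΩ hΩ0 hinvM ht b m,
      sig_add hng hng' hinvM ht k, sig_add hng hng' hinvM ht m]
    ring
  rw [mup_curvF_expand hU hnP hX hY α ht k,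
    mup_curvF_expand hU hnG hX hY α ht k,
    mup_curvF_expand hU hnG' hX hY α ht k]
  have t3 : (∑ m, ∑ a, ∑ b, α t m * (X t a * (Y t b
        * Wt (pencil (fun u => Ω u ^ 2 • g u) (fun u => Ω u ^ 2 • g' u) lam) k m a b t)))
      = (∑ m, ∑ a, ∑ b, α t m * (X t a * (Y t b
          * Wt (fun u => Ω u ^ 2 • g u) k m a b t)))
        + lam * ∑ m, ∑ a, ∑ b, α t m * (X t a * (Y t b
            * Wt (fun u => Ω u ^ 2 • g' u) k m a b t)) := by
    rw [sum3_congr (fun m a b => by rw [f2W m a b]; ring :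
      ∀ m a b, α t m * (X t a * (Y t b
          * Wt (pencil (fun u => Ω u ^ 2 • g u) (fun u => Ω u ^ 2 • g' u) lam) k m a b t))
        = α t m * (X t a * (Y t b * Wt (fun u => Ω u ^ 2 • g u) k m a b t))
          + lam * (α t m * (X t a * (Y t b * Wt (fun u => Ω u ^ 2 • g' u) k m a b t))))]
    exact sum3_add_smul lam _ _
  rw [t3]
  ring

end Final2
end Stmt7Aux

open Stmt7Aux

/-- Compatibility is conformally invariant: if (g, g̃) is a compatible pair
of metrics and Ω is smooth and nowhere vanishing, then (Ω²g, Ω²g̃) is a compatible pair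
of metrics. -/
theorem stmt7 {n : ℕ} (U : Set (Pt n)) (hUopen : IsOpen U) (hUne : U.Nonempty)
    (g g' : Met n) (hmet : IsMetricOn U g) (hmet' : IsMetricOn U g')
    (hcompat : Compatible U g g')
    (Ω : Pt n → ℝ) (hΩ : ContDiffOn ℝ (⊤ : ℕ∞) Ω U) (hΩ0 : ∀ t ∈ U, Ω t ≠ 0) :
    IsMetricOn U (fun t => (Ω t) ^ 2 • g t) ∧
    IsMetricOn U (fun t => (Ω t) ^ 2 • g' t) ∧
    Compatible U (fun t => (Ω t) ^ 2 • g t) (fun t => (Ω t) ^ 2 • g' t) := by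
  have hng : NiceMet U g :=
    ⟨hmet.1, fun s hs => (hmet.2 s hs).1, fun s hs => (hmet.2 s hs).2⟩
  have hng' : NiceMet U g' :=
    ⟨hmet'.1, fun s hs => (hmet'.2 s hs).1, fun s hs => (hmet'.2 s hs).2⟩
  have hΩ' : SOn U Ω := hΩ
  have hG : NiceMet U (fun t => Ω t ^ 2 • g t) := G_nice hng hΩ' hΩ0
  have hG' : NiceMet U (fun t => Ω t ^ 2 • g' t) := G_nice hng' hΩ' hΩ0
  refine ⟨⟨hG.sm, fun s hs => ⟨hG.symm s hs, hG.unit s hs⟩⟩,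
    ⟨hG'.sm, fun s hs => ⟨hG'.symm s hs, hG'.unit s hs⟩⟩, ?_, ?_⟩
  · exact final_almost hUopen hng hng' hΩ' hΩ0 hcompat.1
  · intro lam hinv X Y hX hY α hα t ht k
    exact final_compat hUopen hng hng' hΩ' hΩ0 hcompat lam hinv X Y hX hY α hα ht k
end
end

section
/- Let (U, •, g̃, E) be a Frobenius manifold with intersection metric g, and let Ω be a smooth nowhere-vanishing real function on U. Set h = Ω²g and h̃ = Ω²g̃, and assume the triple (h, h̃, E) is regular. Then the multiplication on tangent vectors associated to the regular triple (h, h̃, E) coincides with the multiplication associated to the regular triple (g, g̃, E), hence with •. -/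
open scoped BigOperators

noncomputable section

variable {n : ℕ}

lemma circM_eq (g1 g2 : Met n) (α β : OneForm n) (t : Pt n) (k : Fin n) :
    circM g1 g2 α β t k
      = ∑ i, (∑ l, (g1 t)⁻¹ i l * α t l) *
          (∑ m, (chr g2 m i k t - chr g1 m i k t) * β t m) := by
  unfold circM covF mup
  rw [← Finset.sum_sub_distrib]
  refine Finset.sum_congr rfl fun i _ => ?_
  simp only [sub_mul, Finset.sum_sub_distrib]
  ring


lemma swapsum (f : Fin n → ℝ) (M : Fin n → Fin n → ℝ) (v : Fin n → ℝ) :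
    (∑ p, f p * ∑ m, M p m * v m) = ∑ m, (∑ p, f p * M p m) * v m := by
  simp only [Finset.mul_sum, Finset.sum_mul]
  rw [Finset.sum_comm]
  exact Finset.sum_congr rfl fun m _ => Finset.sum_congr rfl fun p _ => by ring

lemma inv_push (G' κ : Fin n → Fin n → ℝ)
    (hkron : ∀ a b, (∑ l, G' a l * κ l b) = if a = b then (1:ℝ) else 0)
    (F C : Fin n → ℝ) (h : ∀ a, (∑ b, κ a b * F b) = C a) (k : Fin n) :
    F k = ∑ x, G' k x * C x := by
  calc F k = ∑ b, (if k = b then (1:ℝ) else 0) * F b := by simp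
    _ = ∑ b, (∑ x, G' k x * κ x b) * F b := by
        refine Finset.sum_congr rfl fun b _ => ?_
        rw [hkron]
    _ = ∑ x, G' k x * ∑ b, κ x b * F b := by
        simp only [Finset.sum_mul, Finset.mul_sum]
        rw [Finset.sum_comm]
        exact Finset.sum_congr rfl fun x _ => Finset.sum_congr rfl fun b _ => by ring
    _ = ∑ x, G' k x * C x := Finset.sum_congr rfl fun x _ => by rw [h x]

lemma matrep_ext (FM BM G' κ : Fin n → Fin n → ℝ)
    (hkron : ∀ a b, (∑ l, G' a l * κ l b) = if a = b then (1:ℝ) else 0)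
    (hcols : ∀ k j, (∑ q, FM k q * G' q j) = ∑ q, BM k q * G' q j) (k q : Fin n) :
    FM k q = BM k q := by
  have h1 : ∀ M : Fin n → Fin n → ℝ, (∑ j, (∑ q', M k q' * G' q' j) * κ j q) = M k q := by
    intro M
    calc (∑ j, (∑ q', M k q' * G' q' j) * κ j q)
        = ∑ q', M k q' * ∑ j, G' q' j * κ j q :=
          (swapsum (fun q' => M k q') G' (fun j => κ j q)).symm
      _ = M k q := by
          simp only [hkron]
          simp
  rw [← h1 FM, ← h1 BM]
  exact Finset.sum_congr rfl fun j _ => by rw [hcols k j]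

lemma swapsum' (f : Fin n → ℝ) (M : Fin n → Fin n → ℝ) (v : Fin n → ℝ) :
    (∑ m, (∑ p, M p m * f p) * v m) = ∑ p, f p * ∑ m, M p m * v m := by
  calc (∑ m, (∑ p, M p m * f p) * v m) = ∑ m, (∑ p, f p * M p m) * v m :=
        Finset.sum_congr rfl fun m _ => by
          rw [Finset.sum_congr rfl fun p _ => (by ring : M p m * f p = f p * M p m)]
    _ = ∑ p, f p * ∑ m, M p m * v m := (swapsum f M v).symm

lemma keyC1 (G G' : Fin n → Fin n → ℝ) (Δ Δh : Fin n → Fin n → Fin n → ℝ)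
    (pm qm : Fin n → ℝ)
    (hΔh : ∀ m p k, Δh m p k = Δ m p k + G p k * pm m - G' p k * qm m)
    (Xv v : Fin n → ℝ) (k : Fin n) :
    (∑ p, Xv p * ∑ m, Δh m p k * v m)
      = (∑ p, Xv p * ∑ m, Δ m p k * v m)
        + (∑ p, Xv p * G p k) * (∑ m, pm m * v m)
        - (∑ p, Xv p * G' p k) * (∑ m, qm m * v m) := by
  have inner : ∀ p, (∑ m, Δh m p k * v m)
      = (∑ m, Δ m p k * v m) + G p k * (∑ m, pm m * v m) - G' p k * (∑ m, qm m * v m) := by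
    intro p
    simp only [hΔh, add_mul, sub_mul, Finset.sum_add_distrib, Finset.sum_sub_distrib]
    congr 1
    · congr 1
      rw [Finset.mul_sum]
      exact Finset.sum_congr rfl fun m _ => by ring
    · rw [Finset.mul_sum]
      exact Finset.sum_congr rfl fun m _ => by ring
  calc (∑ p, Xv p * ∑ m, Δh m p k * v m)
      = ∑ p, (Xv p * (∑ m, Δ m p k * v m) + Xv p * G p k * (∑ m, pm m * v m)
          - Xv p * G' p k * (∑ m, qm m * v m)) :=
        Finset.sum_congr rfl fun p _ => by rw [inner p]; ring
    _ = _ := by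
        rw [Finset.sum_sub_distrib, Finset.sum_add_distrib, Finset.sum_mul, Finset.sum_mul]

lemma keyC6 (T Th : Fin n → Fin n → ℝ) (gE g'E pm qm : Fin n → ℝ)
    (hTh : ∀ k m, Th k m = T k m + gE k * pm m - g'E k * qm m)
    (v : Fin n → ℝ) (k : Fin n) :
    (∑ m, Th k m * v m)
      = (∑ m, T k m * v m) + gE k * (∑ m, pm m * v m) - g'E k * (∑ m, qm m * v m) := by
  simp only [hTh, add_mul, sub_mul, Finset.sum_add_distrib, Finset.sum_sub_distrib]
  congr 1
  · congr 1
    rw [Finset.mul_sum]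
    exact Finset.sum_congr rfl fun m _ => by ring
  · rw [Finset.mul_sum]
    exact Finset.sum_congr rfl fun m _ => by ring

lemma sum_factor (s : ℝ) (f g : Fin n → ℝ) (h : ∀ m, f m = s * g m) :
    (∑ m, f m) = s * ∑ m, g m := by
  conv_rhs => rw [Finset.mul_sum]
  exact Finset.sum_congr rfl fun m _ => h m

lemma key_alg (G G' ι κ T Ti Th Thi : Fin n → Fin n → ℝ)
    (c0 Δ Δh : Fin n → Fin n → Fin n → ℝ)
    (E0 e0 ψ : Fin n → ℝ) (ω : ℝ) (hω : ω ≠ 0)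
    (hGι : ∀ a b, (∑ l, G a l * ι l b) = if a = b then (1:ℝ) else 0)
    (hκG' : ∀ a b, (∑ l, κ a l * G' l b) = if a = b then (1:ℝ) else 0)
    (hG'κ : ∀ a b, (∑ l, G' a l * κ l b) = if a = b then (1:ℝ) else 0)
    (hGs : ∀ a b, G a b = G b a)
    (hG's : ∀ a b, G' a b = G' b a)
    (hcomm : ∀ a x y, c0 a x y = c0 a y x)
    (hunit : ∀ a x, (∑ y, c0 a y x * e0 y) = if a = x then (1:ℝ) else 0)
    (hdefn : ∀ a y, (∑ l, ι a l * G' l y) = ∑ x, c0 a x y * E0 x)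
    (hTiT : ∀ a b, (∑ l, Ti a l * T l b) = if a = b then (1:ℝ) else 0)
    (hThThi : ∀ a b, (∑ l, Th a l * Thi l b) = if a = b then (1:ℝ) else 0)
    (hΔh : ∀ m p k, Δh m p k = Δ m p k + G p k * (∑ l, ι m l * ψ l)
        - G' p k * (∑ l, κ m l * ψ l))
    (hTh : ∀ k m, Th k m = T k m + (∑ q, G k q * E0 q) * (∑ l, ι m l * ψ l)
        - (∑ q, G' k q * E0 q) * (∑ l, κ m l * ψ l))
    (hmul : ∀ a x y, (∑ b, κ a b * ∑ p, (∑ l, ι p l * G' l x) *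
        ∑ m, Δ m p b * (∑ q, Ti m q * G' q y)) = c0 a x y)
    (a i j : Fin n) :
    (∑ b, ((ω^2)⁻¹ * κ a b) * ∑ p, (∑ l, ((ω^2)⁻¹ * ι p l) * (ω^2 * G' l i)) *
        ∑ m, Δh m p b * (∑ q, Thi m q * (ω^2 * G' q j))) = c0 a i j := by
  have hω2 : (ω:ℝ)^2 ≠ 0 := pow_ne_zero 2 hω
  -- Step 0 : clean up the conformal factors
  have step0 : (∑ b, ((ω^2)⁻¹ * κ a b) * ∑ p, (∑ l, ((ω^2)⁻¹ * ι p l) * (ω^2 * G' l i)) *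
        ∑ m, Δh m p b * (∑ q, Thi m q * (ω^2 * G' q j)))
      = ∑ b, κ a b * ∑ p, (∑ l, ι p l * G' l i) *
          ∑ m, Δh m p b * (∑ q, Thi m q * G' q j) := by
    refine Finset.sum_congr rfl fun b _ => ?_
    have e1 : ∀ p, (∑ l, ((ω^2)⁻¹ * ι p l) * (ω^2 * G' l i)) = ∑ l, ι p l * G' l i := by
      intro p
      refine Finset.sum_congr rfl fun l _ => ?_
      field_simp
    have e3 : (∑ p, (∑ l, ((ω^2)⁻¹ * ι p l) * (ω^2 * G' l i)) *
          ∑ m, Δh m p b * (∑ q, Thi m q * (ω^2 * G' q j)))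
        = ω^2 * ∑ p, (∑ l, ι p l * G' l i) * ∑ m, Δh m p b * (∑ q, Thi m q * G' q j) := by
      have e5 : ∀ m, (∑ q, Thi m q * (ω^2 * G' q j)) = ω^2 * ∑ q, Thi m q * G' q j := by
        intro m
        exact sum_factor (ω^2) _ _ (fun q => by ring)
      have e4 : ∀ p, (∑ l, ((ω^2)⁻¹ * ι p l) * (ω^2 * G' l i)) *
            (∑ m, Δh m p b * (∑ q, Thi m q * (ω^2 * G' q j)))
          = ω^2 * ((∑ l, ι p l * G' l i) * ∑ m, Δh m p b * (∑ q, Thi m q * G' q j)) := by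
        intro p
        rw [e1 p, sum_factor (ω^2) (fun m => Δh m p b * (∑ q, Thi m q * (ω^2 * G' q j)))
          (fun m => Δh m p b * (∑ q, Thi m q * G' q j)) (fun m => by
            show Δh m p b * (∑ q, Thi m q * (ω^2 * G' q j))
              = ω^2 * (Δh m p b * (∑ q, Thi m q * G' q j))
            rw [e5 m]; ring)]
        ring
      exact sum_factor (ω^2) _ _ e4
    rw [e3]
    field_simp
  rw [step0]
    -- matrix representation of the bullet product (first slot = i-th column of G')
  have BUrep : ∀ (v : Fin n → ℝ) (k : Fin n),
      (∑ b, G' k b * ∑ q, c0 b i q * (∑ l, κ q l * v l))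
        = ∑ l, (∑ b, G' k b * ∑ q, c0 b i q * κ q l) * v l := by
    intro v k
    calc (∑ b, G' k b * ∑ q, c0 b i q * (∑ l, κ q l * v l))
        = ∑ b, G' k b * ∑ l, (∑ q, c0 b i q * κ q l) * v l :=
          Finset.sum_congr rfl fun b _ => by rw [swapsum (fun q => c0 b i q) κ v]
      _ = ∑ l, (∑ b, G' k b * ∑ q, c0 b i q * κ q l) * v l :=
          swapsum (fun b => G' k b) (fun b l => ∑ q, c0 b i q * κ q l) v
  have FTrep : ∀ (z : Fin n → ℝ) (k : Fin n),
      (∑ p, (∑ l, ι p l * G' l i) * ∑ m, Δ m p k * (∑ q, Ti m q * z q))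
        = ∑ q, (∑ p, (∑ l, ι p l * G' l i) * (∑ m, Δ m p k * Ti m q)) * z q := by
    intro z k
    calc (∑ p, (∑ l, ι p l * G' l i) * ∑ m, Δ m p k * (∑ q, Ti m q * z q))
        = ∑ p, (∑ l, ι p l * G' l i) * ∑ q, (∑ m, Δ m p k * Ti m q) * z q :=
          Finset.sum_congr rfl fun p _ => by rw [swapsum (fun m => Δ m p k) Ti z]
      _ = ∑ q, (∑ p, (∑ l, ι p l * G' l i) * (∑ m, Δ m p k * Ti m q)) * z q :=
          swapsum (fun p => ∑ l, ι p l * G' l i) (fun p q => ∑ m, Δ m p k * Ti m q) z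
  have BUcol : ∀ (k j' : Fin n),
      (∑ b, G' k b * ∑ q, c0 b i q * (∑ l, κ q l * G' l j'))
        = ∑ b, G' k b * c0 b i j' := by
    intro k j'
    refine Finset.sum_congr rfl fun b _ => ?_
    congr 1
    calc (∑ q, c0 b i q * (∑ l, κ q l * G' l j'))
        = ∑ q, c0 b i q * (if q = j' then 1 else 0) :=
          Finset.sum_congr rfl fun q _ => by rw [hκG' q j']
      _ = c0 b i j' := by simp
  have Fcol : ∀ (k j' : Fin n),
      (∑ p, (∑ l, ι p l * G' l i) * ∑ m, Δ m p k * (∑ q, Ti m q * G' q j'))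
        = ∑ b, G' k b * c0 b i j' :=
    fun k j' => inv_push G' κ hG'κ
      (fun b => ∑ p, (∑ l, ι p l * G' l i) * ∑ m, Δ m p b * (∑ q, Ti m q * G' q j'))
      (fun a' => c0 a' i j') (fun a' => hmul a' i j') k
  have FMBM : ∀ (k q : Fin n),
      (∑ p, (∑ l, ι p l * G' l i) * (∑ m, Δ m p k * Ti m q))
        = ∑ b, G' k b * ∑ q', c0 b i q' * κ q' q := by
    intro k q
    refine matrep_ext (fun k q => ∑ p, (∑ l, ι p l * G' l i) * (∑ m, Δ m p k * Ti m q))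
      (fun k q => ∑ b, G' k b * ∑ q', c0 b i q' * κ q' q) G' κ hG'κ (fun k j' => ?_) k q
    calc (∑ q, (∑ p, (∑ l, ι p l * G' l i) * (∑ m, Δ m p k * Ti m q)) * G' q j')
        = ∑ p, (∑ l, ι p l * G' l i) * ∑ m, Δ m p k * (∑ q, Ti m q * G' q j') :=
          (FTrep (fun q => G' q j') k).symm
      _ = ∑ b, G' k b * c0 b i j' := Fcol k j'
      _ = ∑ b, G' k b * ∑ q, c0 b i q * (∑ l, κ q l * G' l j') := (BUcol k j').symm
      _ = ∑ q, (∑ b, G' k b * ∑ q', c0 b i q' * κ q' q) * G' q j' :=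
          BUrep (fun l => G' l j') k
  have Ffull : ∀ (v : Fin n → ℝ) (k : Fin n),
      (∑ p, (∑ l, ι p l * G' l i) * ∑ m, Δ m p k * v m)
        = ∑ b, G' k b * ∑ q, c0 b i q * (∑ l, κ q l * (∑ m, T l m * v m)) := by
    intro v k
    have hrec : ∀ m, (∑ q, Ti m q * (∑ m', T q m' * v m')) = v m := by
      intro m
      calc (∑ q, Ti m q * (∑ m', T q m' * v m'))
          = ∑ m', (∑ q, Ti m q * T q m') * v m' := swapsum (fun q => Ti m q) T v
        _ = v m := by simp only [hTiT]; simp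
    calc (∑ p, (∑ l, ι p l * G' l i) * ∑ m, Δ m p k * v m)
        = ∑ p, (∑ l, ι p l * G' l i) *
            ∑ m, Δ m p k * (∑ q, Ti m q * (∑ m', T q m' * v m')) := by
          refine Finset.sum_congr rfl fun p _ => ?_
          congr 1
          exact (Finset.sum_congr rfl fun m _ => by rw [hrec m]).symm
      _ = ∑ q, (∑ p, (∑ l, ι p l * G' l i) * (∑ m, Δ m p k * Ti m q)) * (∑ m', T q m' * v m') :=
          FTrep (fun q => ∑ m', T q m' * v m') k
      _ = ∑ q, (∑ b, G' k b * ∑ q', c0 b i q' * κ q' q) * (∑ m', T q m' * v m') :=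
          Finset.sum_congr rfl fun q _ => by rw [FMBM k q]
      _ = ∑ b, G' k b * ∑ q, c0 b i q * (∑ l, κ q l * (∑ m, T l m * v m)) :=
          (BUrep (fun l => ∑ m, T l m * v m) k).symm
  have XG : ∀ b, (∑ p, (∑ l, ι p l * G' l i) * G p b) = G' b i := by
    intro b
    calc (∑ p, (∑ l, ι p l * G' l i) * G p b)
        = ∑ p, G b p * (∑ l, ι p l * G' l i) :=
          Finset.sum_congr rfl fun p _ => by rw [hGs p b]; ring
      _ = ∑ l, (∑ p, G b p * ι p l) * G' l i := swapsum (fun p => G b p) ι (fun l => G' l i)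
      _ = G' b i := by simp only [hGι]; simp
  have C4 : ∀ b, (∑ p, (∑ l, ι p l * G' l i) * G' p b)
      = ∑ b', G' b b' * ∑ q, c0 b' i q * (∑ l, κ q l * (∑ q', G' l q' * E0 q')) := by
    intro b
    have h1 : ∀ q, (∑ l, κ q l * (∑ q', G' l q' * E0 q')) = E0 q := by
      intro q
      calc (∑ l, κ q l * (∑ q', G' l q' * E0 q'))
          = ∑ q', (∑ l, κ q l * G' l q') * E0 q' := swapsum (fun l => κ q l) G' E0
        _ = E0 q := by simp only [hκG']; simp
    symm
    calc (∑ b', G' b b' * ∑ q, c0 b' i q * (∑ l, κ q l * (∑ q', G' l q' * E0 q')))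
        = ∑ b', G' b b' * (∑ l, ι b' l * G' l i) := by
          refine Finset.sum_congr rfl fun b' _ => ?_
          congr 1
          calc (∑ q, c0 b' i q * (∑ l, κ q l * (∑ q', G' l q' * E0 q')))
              = ∑ q, c0 b' q i * E0 q :=
                Finset.sum_congr rfl fun q _ => by rw [h1 q, hcomm b' i q]
            _ = ∑ l, ι b' l * G' l i := (hdefn b' i).symm
      _ = ∑ p, (∑ l, ι p l * G' l i) * G' p b :=
          Finset.sum_congr rfl fun p _ => by rw [hG's b p]; ring
  have hG'row : ∀ (b j' : Fin n), G' b j' = ∑ l, G b l * (∑ q, c0 l q j' * E0 q) := by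
    intro b j'
    calc G' b j' = ∑ l', (if b = l' then (1:ℝ) else 0) * G' l' j' := by simp
      _ = ∑ l', (∑ l, G b l * ι l l') * G' l' j' :=
          Finset.sum_congr rfl fun l' _ => by rw [hGι b l']
      _ = ∑ l, G b l * (∑ l', ι l l' * G' l' j') :=
          (swapsum (fun l => G b l) ι (fun l' => G' l' j')).symm
      _ = ∑ l, G b l * (∑ q, c0 l q j' * E0 q) :=
          Finset.sum_congr rfl fun l _ => by rw [hdefn l j']
  have iC : ∀ k, (∑ q, G k q * E0 q) = ∑ q, G' k q * e0 q := by
    intro k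
    symm
    calc (∑ q, G' k q * e0 q)
        = ∑ q, (∑ l, G k l * (∑ p, c0 l p q * E0 p)) * e0 q :=
          Finset.sum_congr rfl fun q _ => by rw [hG'row k q]
      _ = ∑ l, G k l * (∑ q, (∑ p, c0 l p q * E0 p) * e0 q) :=
          (swapsum (fun l => G k l) (fun l q => ∑ p, c0 l p q * E0 p) e0).symm
      _ = ∑ l, G k l * E0 l := by
          refine Finset.sum_congr rfl fun l _ => ?_
          congr 1
          calc (∑ q, (∑ p, c0 l p q * E0 p) * e0 q)
              = ∑ p, E0 p * (∑ q, c0 l p q * e0 q) := swapsum' E0 (fun p q => c0 l p q) e0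
            _ = ∑ p, E0 p * (if l = p then 1 else 0) := by
                refine Finset.sum_congr rfl fun p _ => ?_
                congr 1
                calc (∑ q, c0 l p q * e0 q)
                    = ∑ q, c0 l q p * e0 q :=
                      Finset.sum_congr rfl fun q _ => by rw [hcomm l p q]
                  _ = if l = p then 1 else 0 := hunit l p
            _ = E0 l := by simp
      _ = ∑ q, G k q * E0 q := rfl
  have C5 : ∀ b, G' b i
      = ∑ b', G' b b' * ∑ q, c0 b' i q * (∑ l, κ q l * (∑ q', G l q' * E0 q')) := by
    intro b
    have h1 : ∀ q, (∑ l, κ q l * (∑ q', G l q' * E0 q')) = e0 q := by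
      intro q
      calc (∑ l, κ q l * (∑ q', G l q' * E0 q'))
          = ∑ l, κ q l * (∑ q', G' l q' * e0 q') :=
            Finset.sum_congr rfl fun l _ => by rw [iC l]
        _ = ∑ q', (∑ l, κ q l * G' l q') * e0 q' := swapsum (fun l => κ q l) G' e0
        _ = e0 q := by simp only [hκG']; simp
    symm
    calc (∑ b', G' b b' * ∑ q, c0 b' i q * (∑ l, κ q l * (∑ q', G l q' * E0 q')))
        = ∑ b', G' b b' * (if b' = i then 1 else 0) := by
          refine Finset.sum_congr rfl fun b' _ => ?_
          congr 1
          calc (∑ q, c0 b' i q * (∑ l, κ q l * (∑ q', G l q' * E0 q')))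
              = ∑ q, c0 b' q i * e0 q :=
                Finset.sum_congr rfl fun q _ => by rw [h1 q, hcomm b' i q]
            _ = if b' = i then 1 else 0 := hunit b' i
      _ = G' b i := by simp
  have BUlin : ∀ (v : Fin n → ℝ) (k : Fin n),
      (∑ b', G' k b' * ∑ q, c0 b' i q * (∑ l, κ q l * (∑ m, Th l m * v m)))
        = (∑ b', G' k b' * ∑ q, c0 b' i q * (∑ l, κ q l * (∑ m, T l m * v m)))
          + (∑ b', G' k b' * ∑ q, c0 b' i q * (∑ l, κ q l * (∑ q', G l q' * E0 q')))
            * (∑ m, (∑ l, ι m l * ψ l) * v m)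
          - (∑ b', G' k b' * ∑ q, c0 b' i q * (∑ l, κ q l * (∑ q', G' l q' * E0 q')))
            * (∑ m, (∑ l, κ m l * ψ l) * v m) := by
    intro v k
    have B1 : (∑ b', G' k b' * ∑ q, c0 b' i q * (∑ l, κ q l * (∑ m, Th l m * v m)))
        = ∑ l, (∑ b', G' k b' * ∑ q, c0 b' i q * κ q l) * (∑ m, Th l m * v m) :=
      BUrep (fun l => ∑ m, Th l m * v m) k
    have B2 : (∑ b', G' k b' * ∑ q, c0 b' i q * (∑ l, κ q l * (∑ m, T l m * v m)))
        = ∑ l, (∑ b', G' k b' * ∑ q, c0 b' i q * κ q l) * (∑ m, T l m * v m) :=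
      BUrep (fun l => ∑ m, T l m * v m) k
    have B3 : (∑ b', G' k b' * ∑ q, c0 b' i q * (∑ l, κ q l * (∑ q', G l q' * E0 q')))
        = ∑ l, (∑ b', G' k b' * ∑ q, c0 b' i q * κ q l) * (∑ q', G l q' * E0 q') :=
      BUrep (fun l => ∑ q', G l q' * E0 q') k
    have B4 : (∑ b', G' k b' * ∑ q, c0 b' i q * (∑ l, κ q l * (∑ q', G' l q' * E0 q')))
        = ∑ l, (∑ b', G' k b' * ∑ q, c0 b' i q * κ q l) * (∑ q', G' l q' * E0 q') :=
      BUrep (fun l => ∑ q', G' l q' * E0 q') k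
    rw [B1, B2, B3, B4]
    have K : ∀ l, (∑ m, Th l m * v m)
        = (∑ m, T l m * v m) + (∑ q', G l q' * E0 q') * (∑ m, (∑ l', ι m l' * ψ l') * v m)
          - (∑ q', G' l q' * E0 q') * (∑ m, (∑ l', κ m l' * ψ l') * v m) :=
      fun l => keyC6 T Th (fun l => ∑ q', G l q' * E0 q') (fun l => ∑ q', G' l q' * E0 q')
        (fun m => ∑ l', ι m l' * ψ l') (fun m => ∑ l', κ m l' * ψ l') hTh v l
    calc (∑ l, (∑ b', G' k b' * ∑ q, c0 b' i q * κ q l) * (∑ m, Th l m * v m))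
        = ∑ l, ((∑ b', G' k b' * ∑ q, c0 b' i q * κ q l) * (∑ m, T l m * v m)
            + (∑ b', G' k b' * ∑ q, c0 b' i q * κ q l) * (∑ q', G l q' * E0 q')
              * (∑ m, (∑ l', ι m l' * ψ l') * v m)
            - (∑ b', G' k b' * ∑ q, c0 b' i q * κ q l) * (∑ q', G' l q' * E0 q')
              * (∑ m, (∑ l', κ m l' * ψ l') * v m)) :=
          Finset.sum_congr rfl fun l _ => by rw [K l]; ring
      _ = _ := by
          rw [Finset.sum_sub_distrib, Finset.sum_add_distrib, Finset.sum_mul, Finset.sum_mul]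
  have Thw : ∀ l, (∑ m, Th l m * (∑ q, Thi m q * G' q j)) = G' l j := by
    intro l
    calc (∑ m, Th l m * (∑ q, Thi m q * G' q j))
        = ∑ q, (∑ m, Th l m * Thi m q) * G' q j :=
          swapsum (fun m => Th l m) Thi (fun q => G' q j)
      _ = G' l j := by simp only [hThThi]; simp
  have main : ∀ b, (∑ p, (∑ l, ι p l * G' l i) * ∑ m, Δh m p b * (∑ q, Thi m q * G' q j))
      = ∑ b', G' b b' * c0 b' i j := by
    intro b
    have K1 : (∑ p, (∑ l, ι p l * G' l i) * ∑ m, Δh m p b * (∑ q, Thi m q * G' q j))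
        = (∑ p, (∑ l, ι p l * G' l i) * ∑ m, Δ m p b * (∑ q, Thi m q * G' q j))
          + (∑ p, (∑ l, ι p l * G' l i) * G p b)
            * (∑ m, (∑ l, ι m l * ψ l) * (∑ q, Thi m q * G' q j))
          - (∑ p, (∑ l, ι p l * G' l i) * G' p b)
            * (∑ m, (∑ l, κ m l * ψ l) * (∑ q, Thi m q * G' q j)) :=
      keyC1 G G' Δ Δh (fun m => ∑ l, ι m l * ψ l) (fun m => ∑ l, κ m l * ψ l) hΔh
        (fun p => ∑ l, ι p l * G' l i) (fun m => ∑ q, Thi m q * G' q j) b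
    have F1 : (∑ p, (∑ l, ι p l * G' l i) * ∑ m, Δ m p b * (∑ q, Thi m q * G' q j))
        = ∑ b', G' b b' * ∑ q, c0 b' i q *
            (∑ l, κ q l * (∑ m, T l m * (∑ q', Thi m q' * G' q' j))) :=
      Ffull (fun m => ∑ q, Thi m q * G' q j) b
    have L1 : (∑ b', G' b b' * ∑ q, c0 b' i q *
          (∑ l, κ q l * (∑ m, Th l m * (∑ q', Thi m q' * G' q' j))))
        = (∑ b', G' b b' * ∑ q, c0 b' i q *
            (∑ l, κ q l * (∑ m, T l m * (∑ q', Thi m q' * G' q' j))))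
          + (∑ b', G' b b' * ∑ q, c0 b' i q * (∑ l, κ q l * (∑ q', G l q' * E0 q')))
            * (∑ m, (∑ l, ι m l * ψ l) * (∑ q', Thi m q' * G' q' j))
          - (∑ b', G' b b' * ∑ q, c0 b' i q * (∑ l, κ q l * (∑ q', G' l q' * E0 q')))
            * (∑ m, (∑ l, κ m l * ψ l) * (∑ q', Thi m q' * G' q' j)) :=
      BUlin (fun m => ∑ q, Thi m q * G' q j) b
    rw [K1, F1, XG b, C5 b, C4 b, ← L1]
    have L2 : (∑ b', G' b b' * ∑ q, c0 b' i q *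
          (∑ l, κ q l * (∑ m, Th l m * (∑ q', Thi m q' * G' q' j))))
        = ∑ b', G' b b' * ∑ q, c0 b' i q * (∑ l, κ q l * G' l j) := by
      refine Finset.sum_congr rfl fun b' _ => ?_
      congr 1
      refine Finset.sum_congr rfl fun q _ => ?_
      congr 1
      refine Finset.sum_congr rfl fun l _ => ?_
      rw [Thw l]
    rw [L2]
    exact BUcol b j
  calc (∑ b, κ a b * ∑ p, (∑ l, ι p l * G' l i) * ∑ m, Δh m p b * (∑ q, Thi m q * G' q j))
      = ∑ b, κ a b * ∑ b', G' b b' * c0 b' i j :=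
        Finset.sum_congr rfl fun b _ => by rw [main b]
    _ = ∑ b', (∑ b, κ a b * G' b b') * c0 b' i j :=
        swapsum (fun b => κ a b) G' (fun b' => c0 b' i j)
    _ = c0 a i j := by simp only [hκG']; simp

lemma pder_conf {U : Set (Pt n)} (hU : IsOpen U) (g : Met n) (hg : SmoothMet U g)
    (Ω : Pt n → ℝ) (hΩ : ContDiffOn ℝ (⊤ : ℕ∞) Ω U) {t : Pt n} (ht : t ∈ U) (l a b : Fin n) :
    pder l (fun s => Ω s ^ 2 * g s a b) t
      = 2 * Ω t * pder l Ω t * g t a b + Ω t ^ 2 * pder l (fun s => g s a b) t := by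
  have hΩd : DifferentiableAt ℝ Ω t :=
    (hΩ.contDiffAt (hU.mem_nhds ht)).differentiableAt (by simp)
  have hgd : DifferentiableAt ℝ (fun s => g s a b) t :=
    ((hg a b).contDiffAt (hU.mem_nhds ht)).differentiableAt (by simp)
  have hfun : (fun s => Ω s ^ 2 * g s a b) = fun s => Ω s * (Ω s * g s a b) := by
    funext s
    ring
  rw [hfun]
  unfold pder
  rw [fderiv_fun_mul (d := fun s => Ω s * g s a b) hΩd (hΩd.mul hgd), fderiv_fun_mul hΩd hgd]
  simp only [ContinuousLinearMap.add_apply, ContinuousLinearMap.coe_smul', Pi.smul_apply,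
    smul_eq_mul, ContinuousLinearMap.smul_apply]
  ring

lemma chr_conformal {U : Set (Pt n)} (hU : IsOpen U) (g : Met n) (hg : SmoothMet U g)
    (hu : ∀ s ∈ U, IsUnit (g s)) (hsym : ∀ s ∈ U, (g s).IsSymm)
    (Ω : Pt n → ℝ) (hΩ : ContDiffOn ℝ (⊤ : ℕ∞) Ω U) (hΩ0 : ∀ s ∈ U, Ω s ≠ 0)
    {t : Pt n} (ht : t ∈ U) (m i k : Fin n) :
    chr (fun s => Ω s ^ 2 • g s) m i k t
      = chr g m i k t + (pder i Ω t / Ω t) * (if m = k then 1 else 0)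
        + (pder k Ω t / Ω t) * (if m = i then 1 else 0)
        - g t i k * ∑ l, (g t)⁻¹ m l * (pder l Ω t / Ω t) := by
  have hω : Ω t ≠ 0 := hΩ0 t ht
  have hud : IsUnit (g t).det := (Matrix.isUnit_iff_isUnit_det _).mp (hu t ht)
  have hinv : (Ω t ^ 2 • g t)⁻¹ = (Ω t ^ 2)⁻¹ • (g t)⁻¹ := by
    apply Matrix.inv_eq_right_inv
    rw [Matrix.smul_mul, Matrix.mul_smul, smul_smul, Matrix.mul_nonsing_inv _ hud,
      mul_inv_cancel₀ (pow_ne_zero 2 hω), one_smul]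
  have hK : ∀ a b, (∑ l, (g t)⁻¹ a l * g t l b) = if a = b then (1:ℝ) else 0 := by
    intro a b
    have := congrFun (congrFun (Matrix.nonsing_inv_mul (g t) hud) a) b
    simpa [Matrix.mul_apply, Matrix.one_apply] using this
  have hgs : ∀ a b, g t a b = g t b a := fun a b => (Matrix.IsSymm.apply (hsym t ht) b a)
  have hpd : ∀ l a b, pder l (fun s => Ω s ^ 2 * g s a b) t
      = 2 * Ω t * pder l Ω t * g t a b + Ω t ^ 2 * pder l (fun s => g s a b) t :=
    fun l a b => pder_conf hU g hg Ω hΩ ht l a b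
  unfold chr
  simp only [hinv, Matrix.smul_apply, smul_eq_mul, hpd]
  have key : ∀ l, (Ω t ^ 2)⁻¹ * (g t)⁻¹ m l *
      ((2 * Ω t * pder i Ω t * g t k l + Ω t ^ 2 * pder i (fun s => g s k l) t)
        + (2 * Ω t * pder k Ω t * g t i l + Ω t ^ 2 * pder k (fun s => g s i l) t)
        - (2 * Ω t * pder l Ω t * g t i k + Ω t ^ 2 * pder l (fun s => g s i k) t))
      = (g t)⁻¹ m l * (pder i (fun s => g s k l) t + pder k (fun s => g s i l) t
          - pder l (fun s => g s i k) t)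
        + 2 * ((pder i Ω t / Ω t) * ((g t)⁻¹ m l * g t l k)
          + (pder k Ω t / Ω t) * ((g t)⁻¹ m l * g t l i)
          - g t i k * ((g t)⁻¹ m l * (pder l Ω t / Ω t))) := by
    intro l
    rw [hgs k l, hgs i l]
    field_simp
    ring
  calc (1:ℝ)/2 * ∑ l, (Ω t ^ 2)⁻¹ * (g t)⁻¹ m l *
      ((2 * Ω t * pder i Ω t * g t k l + Ω t ^ 2 * pder i (fun s => g s k l) t)
        + (2 * Ω t * pder k Ω t * g t i l + Ω t ^ 2 * pder k (fun s => g s i l) t)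
        - (2 * Ω t * pder l Ω t * g t i k + Ω t ^ 2 * pder l (fun s => g s i k) t))
      = 1/2 * ∑ l, ((g t)⁻¹ m l * (pder i (fun s => g s k l) t + pder k (fun s => g s i l) t
          - pder l (fun s => g s i k) t)
        + 2 * ((pder i Ω t / Ω t) * ((g t)⁻¹ m l * g t l k)
          + (pder k Ω t / Ω t) * ((g t)⁻¹ m l * g t l i)
          - g t i k * ((g t)⁻¹ m l * (pder l Ω t / Ω t)))) := by
        rw [Finset.sum_congr rfl fun l _ => key l]
    _ = chr g m i k t + (pder i Ω t / Ω t) * (if m = k then 1 else 0)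
        + (pder k Ω t / Ω t) * (if m = i then 1 else 0)
        - g t i k * ∑ l, (g t)⁻¹ m l * (pder l Ω t / Ω t) := by
        unfold chr
        rw [Finset.sum_add_distrib, ← Finset.mul_sum, Finset.sum_sub_distrib,
          Finset.sum_add_distrib, ← Finset.mul_sum, ← Finset.mul_sum, ← Finset.mul_sum,
          hK, hK]
        ring

/-- Conformally rescaling the flat pencil of a Frobenius manifold by ² does
not change the associated multiplication: the multiplication of the regular triple
(Ω²g, Ω²g̃, E) coincides with that of (g, g̃, E), hence with •. -/
theorem stmt8 {n : ℕ} (U : Set (Pt n)) (hUopen : IsOpen U) (hUne : U.Nonempty)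
    (c : Mul2 n) (g' : Met n) (E e : VF n) (D k : ℝ)
    (hF : IsFrob U c g' E e D k)
    (g : Met n) (d : ℝ) (hI : IsIntersection U c g g' E d)
    (Ω : Pt n → ℝ) (hΩ : ContDiffOn ℝ (⊤ : ℕ∞) Ω U) (hΩ0 : ∀ t ∈ U, Ω t ≠ 0)
    (hreg : RegularTriple U (fun t => (Ω t) ^ 2 • g t) (fun t => (Ω t) ^ 2 • g' t) E) :
    ∀ t ∈ U, ∀ a i j,
      bulMul (fun s => (Ω s) ^ 2 • g s) (fun s => (Ω s) ^ 2 • g' s) E t a i j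
        = bulMul g g' E t a i j ∧
      bulMul (fun s => (Ω s) ^ 2 • g s) (fun s => (Ω s) ^ 2 • g' s) E t a i j
        = c t a i j := by
  intro t ht a i j
  have hω : Ω t ≠ 0 := hΩ0 t ht
  have hω2 : (Ω t)^2 ≠ 0 := pow_ne_zero 2 hω
  have hgS : (g t).IsSymm := (hI.met.2 t ht).1
  have hgU : IsUnit (g t) := (hI.met.2 t ht).2
  have hg'S : (g' t).IsSymm := (hF.met.2 t ht).1
  have hg'U : IsUnit (g' t) := (hF.met.2 t ht).2
  have hgd : IsUnit (g t).det := (Matrix.isUnit_iff_isUnit_det _).mp hgU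
  have hg'd : IsUnit (g' t).det := (Matrix.isUnit_iff_isUnit_det _).mp hg'U
  have entry : ∀ (A B : Matrix (Fin n) (Fin n) ℝ), A * B = 1 →
      ∀ a b, (∑ l, A a l * B l b) = if a = b then (1:ℝ) else 0 := by
    intro A B hAB a b
    have := congrFun (congrFun hAB a) b
    simpa [Matrix.mul_apply, Matrix.one_apply] using this
  have hGι : ∀ a b, (∑ l, g t a l * (g t)⁻¹ l b) = if a = b then (1:ℝ) else 0 :=
    entry _ _ (Matrix.mul_nonsing_inv _ hgd)
  have hιG : ∀ a b, (∑ l, (g t)⁻¹ a l * g t l b) = if a = b then (1:ℝ) else 0 :=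
    entry _ _ (Matrix.nonsing_inv_mul _ hgd)
  have hκG' : ∀ a b, (∑ l, (g' t)⁻¹ a l * g' t l b) = if a = b then (1:ℝ) else 0 :=
    entry _ _ (Matrix.nonsing_inv_mul _ hg'd)
  have hG'κ : ∀ a b, (∑ l, g' t a l * (g' t)⁻¹ l b) = if a = b then (1:ℝ) else 0 :=
    entry _ _ (Matrix.mul_nonsing_inv _ hg'd)
  have hGs : ∀ a b, g t a b = g t b a := fun a b => Matrix.IsSymm.apply hgS b a
  have hG's : ∀ a b, g' t a b = g' t b a := fun a b => Matrix.IsSymm.apply hg'S b a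
  have hinvg : (Ω t ^ 2 • g t)⁻¹ = (Ω t ^ 2)⁻¹ • (g t)⁻¹ := by
    apply Matrix.inv_eq_right_inv
    rw [Matrix.smul_mul, Matrix.mul_smul, smul_smul, Matrix.mul_nonsing_inv _ hgd,
      mul_inv_cancel₀ hω2, one_smul]
  have hinvg' : (Ω t ^ 2 • g' t)⁻¹ = (Ω t ^ 2)⁻¹ • (g' t)⁻¹ := by
    apply Matrix.inv_eq_right_inv
    rw [Matrix.smul_mul, Matrix.mul_smul, smul_smul, Matrix.mul_nonsing_inv _ hg'd,
      mul_inv_cancel₀ hω2, one_smul]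
  have hTu : IsUnit (Tmat g g' E t).det :=
    (Matrix.isUnit_iff_isUnit_det _).mp (hI.regular t ht)
  have hThu : IsUnit (Tmat (fun s => Ω s ^ 2 • g s) (fun s => Ω s ^ 2 • g' s) E t).det :=
    (Matrix.isUnit_iff_isUnit_det _).mp (hreg t ht)
  have hTiT : ∀ a b, (∑ l, (Tmat g g' E t)⁻¹ a l * Tmat g g' E t l b)
      = if a = b then (1:ℝ) else 0 :=
    entry _ _ (Matrix.nonsing_inv_mul _ hTu)
  have hThThi : ∀ a b, (∑ l, Tmat (fun s => Ω s ^ 2 • g s) (fun s => Ω s ^ 2 • g' s) E t a l *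
      (Tmat (fun s => Ω s ^ 2 • g s) (fun s => Ω s ^ 2 • g' s) E t)⁻¹ l b)
      = if a = b then (1:ℝ) else 0 :=
    entry _ _ (Matrix.mul_nonsing_inv _ hThu)
  have hΔh : ∀ m p k,
      (chr (fun s => Ω s ^ 2 • g' s) m p k t - chr (fun s => Ω s ^ 2 • g s) m p k t)
        = (chr g' m p k t - chr g m p k t)
          + g t p k * (∑ l, (g t)⁻¹ m l * (pder l Ω t / Ω t))
          - g' t p k * (∑ l, (g' t)⁻¹ m l * (pder l Ω t / Ω t)) := by
    intro m p k
    rw [chr_conformal hUopen g hI.met.1 (fun s hs => (hI.met.2 s hs).2)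
        (fun s hs => (hI.met.2 s hs).1) Ω hΩ hΩ0 ht m p k,
      chr_conformal hUopen g' hF.met.1 (fun s hs => (hF.met.2 s hs).2)
        (fun s hs => (hF.met.2 s hs).1) Ω hΩ hΩ0 ht m p k]
    ring
  have hsingle : ∀ (M : Matrix (Fin n) (Fin n) ℝ) (l x : Fin n),
      (∑ q, M l q * (Pi.single x 1 : Fin n → ℝ) q) = M l x := by
    intro M l x
    simp [Pi.single_apply]
  have hTgen : ∀ (g1 g2 : Met n),
      (∀ p, (∑ l, (g1 t)⁻¹ p l * (∑ q, g1 t l q * E t q)) = E t p) →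
      ∀ k m, Tmat g1 g2 E t k m = ∑ p, E t p * (chr g2 m p k t - chr g1 m p k t) := by
    intro g1 g2 hraise k m
    have h0 : Tmat g1 g2 E t k m
        = circM g1 g2 (mdown g1 E) (fun _ => Pi.single m 1) t k := rfl
    rw [h0, circM_eq]
    refine Finset.sum_congr rfl fun p _ => ?_
    have h1 : (∑ l, (g1 t)⁻¹ p l * mdown g1 E t l) = E t p := hraise p
    have h2 : (∑ m', (chr g2 m' p k t - chr g1 m' p k t) *
        (fun (_ : Pt n) => (Pi.single m 1 : Fin n → ℝ)) t m') = chr g2 m p k t - chr g1 m p k t := by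
      simp [Pi.single_apply]
    rw [h1, h2]
  have hraise_g : ∀ p, (∑ l, (g t)⁻¹ p l * (∑ q, g t l q * E t q)) = E t p := by
    intro p
    calc (∑ l, (g t)⁻¹ p l * (∑ q, g t l q * E t q))
        = ∑ q, (∑ l, (g t)⁻¹ p l * g t l q) * E t q :=
          swapsum (fun l => (g t)⁻¹ p l) (fun l q => g t l q) (fun q => E t q)
      _ = E t p := by simp only [hιG]; simp
  have hraise_h : ∀ p, (∑ l, ((fun s => Ω s ^ 2 • g s) t)⁻¹ p l *
      (∑ q, (fun s => Ω s ^ 2 • g s) t l q * E t q)) = E t p := by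
    intro p
    have e1 : ∀ l, ((fun s => Ω s ^ 2 • g s) t)⁻¹ p l *
        (∑ q, (fun s => Ω s ^ 2 • g s) t l q * E t q)
        = (g t)⁻¹ p l * (∑ q, g t l q * E t q) := by
      intro l
      have i1 : ((fun s => Ω s ^ 2 • g s) t)⁻¹ p l = (Ω t ^ 2)⁻¹ * (g t)⁻¹ p l := by
        show (Ω t ^ 2 • g t)⁻¹ p l = _
        rw [hinvg]
        simp [Matrix.smul_apply]
      have i2 : (∑ q, (fun s => Ω s ^ 2 • g s) t l q * E t q)
          = Ω t ^ 2 * ∑ q, g t l q * E t q := by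
        refine sum_factor (Ω t ^ 2) _ _ (fun q => ?_)
        show (Ω t ^ 2 • g t) l q * E t q = Ω t ^ 2 * (g t l q * E t q)
        simp [Matrix.smul_apply]
        ring
      rw [i1, i2, show ((Ω t ^ 2)⁻¹ * (g t)⁻¹ p l) * (Ω t ^ 2 * ∑ q, g t l q * E t q)
        = ((Ω t ^ 2)⁻¹ * Ω t ^ 2) * ((g t)⁻¹ p l * ∑ q, g t l q * E t q) from by ring,
        inv_mul_cancel₀ hω2, one_mul]
    rw [Finset.sum_congr rfl fun l _ => e1 l]
    exact hraise_g p
  have hTg : ∀ k m, Tmat g g' E t k m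
      = ∑ p, E t p * (chr g' m p k t - chr g m p k t) := hTgen g g' hraise_g
  have hTh : ∀ k m, Tmat (fun s => Ω s ^ 2 • g s) (fun s => Ω s ^ 2 • g' s) E t k m
      = Tmat g g' E t k m
        + (∑ q, g t k q * E t q) * (∑ l, (g t)⁻¹ m l * (pder l Ω t / Ω t))
        - (∑ q, g' t k q * E t q) * (∑ l, (g' t)⁻¹ m l * (pder l Ω t / Ω t)) := by
    intro k m
    rw [hTgen (fun s => Ω s ^ 2 • g s) (fun s => Ω s ^ 2 • g' s) hraise_h k m]
    have s1 : (∑ p, g t p k * E t p) = ∑ q, g t k q * E t q :=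
      Finset.sum_congr rfl fun p _ => by rw [hGs p k]
    have s2 : (∑ p, g' t p k * E t p) = ∑ q, g' t k q * E t q :=
      Finset.sum_congr rfl fun p _ => by rw [hG's p k]
    calc (∑ p, E t p * (chr (fun s => Ω s ^ 2 • g' s) m p k t
            - chr (fun s => Ω s ^ 2 • g s) m p k t))
        = ∑ p, (E t p * (chr g' m p k t - chr g m p k t)
            + (g t p k * E t p) * (∑ l, (g t)⁻¹ m l * (pder l Ω t / Ω t))
            - (g' t p k * E t p) * (∑ l, (g' t)⁻¹ m l * (pder l Ω t / Ω t))) :=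
          Finset.sum_congr rfl fun p _ => by rw [hΔh m p k]; ring
      _ = (∑ p, E t p * (chr g' m p k t - chr g m p k t))
          + (∑ p, g t p k * E t p) * (∑ l, (g t)⁻¹ m l * (pder l Ω t / Ω t))
          - (∑ p, g' t p k * E t p) * (∑ l, (g' t)⁻¹ m l * (pder l Ω t / Ω t)) := by
          rw [Finset.sum_sub_distrib, Finset.sum_add_distrib, Finset.sum_mul, Finset.sum_mul]
      _ = _ := by rw [s1, s2, ← hTg k m]
  have unfold_bul : ∀ (g1 g2 : Met n) (a x y : Fin n),
      bulMul g1 g2 E t a x y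
        = ∑ b, (g2 t)⁻¹ a b * ∑ p, (∑ l, (g1 t)⁻¹ p l * g2 t l x) *
            ∑ m, (chr g2 m p b t - chr g1 m p b t) *
              (∑ q, (Tmat g1 g2 E t)⁻¹ m q * g2 t q y) := by
    intro g1 g2 a x y
    show (∑ b, (g2 t)⁻¹ a b * bulF g1 g2 E (mdown g2 (fun _ => Pi.single x 1))
        (mdown g2 (fun _ => Pi.single y 1)) t b) = _
    refine Finset.sum_congr rfl fun b _ => ?_
    congr 1
    show circM g1 g2 (mdown g2 (fun _ => Pi.single x 1))
        (TinvF g1 g2 E (mdown g2 (fun _ => Pi.single y 1))) t b = _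
    rw [circM_eq]
    refine Finset.sum_congr rfl fun p _ => ?_
    congr 1
    · refine Finset.sum_congr rfl fun l _ => ?_
      congr 1
      exact hsingle (g2 t) l x
    · refine Finset.sum_congr rfl fun m _ => ?_
      congr 1
      show (∑ q, (Tmat g1 g2 E t)⁻¹ m q * mdown g2 (fun _ => Pi.single y 1) t q) = _
      refine Finset.sum_congr rfl fun q _ => ?_
      congr 1
      exact hsingle (g2 t) q y
  have hmul : ∀ a x y, (∑ b, (g' t)⁻¹ a b * ∑ p, (∑ l, (g t)⁻¹ p l * g' t l x) *
      ∑ m, (chr g' m p b t - chr g m p b t) *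
        (∑ q, (Tmat g g' E t)⁻¹ m q * g' t q y)) = c t a x y :=
    fun a x y => (unfold_bul g g' a x y).symm.trans (hI.mul_eq t ht a x y)
  have hc : bulMul (fun s => Ω s ^ 2 • g s) (fun s => Ω s ^ 2 • g' s) E t a i j
      = c t a i j := by
    calc bulMul (fun s => Ω s ^ 2 • g s) (fun s => Ω s ^ 2 • g' s) E t a i j
        = ∑ b, ((Ω t ^ 2)⁻¹ * (g' t)⁻¹ a b) *
            ∑ p, (∑ l, ((Ω t ^ 2)⁻¹ * (g t)⁻¹ p l) * (Ω t ^ 2 * g' t l i)) *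
              ∑ m, (chr (fun s => Ω s ^ 2 • g' s) m p b t
                  - chr (fun s => Ω s ^ 2 • g s) m p b t) *
                (∑ q, (Tmat (fun s => Ω s ^ 2 • g s) (fun s => Ω s ^ 2 • g' s) E t)⁻¹ m q *
                  (Ω t ^ 2 * g' t q j)) := by
          rw [unfold_bul (fun s => Ω s ^ 2 • g s) (fun s => Ω s ^ 2 • g' s) a i j]
          simp only [hinvg, hinvg', Matrix.smul_apply, smul_eq_mul]
      _ = c t a i j :=
          key_alg (fun a b => g t a b) (fun a b => g' t a b)
            (fun a b => (g t)⁻¹ a b) (fun a b => (g' t)⁻¹ a b)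
            (fun a b => Tmat g g' E t a b) (fun a b => (Tmat g g' E t)⁻¹ a b)
            (fun a b => Tmat (fun s => Ω s ^ 2 • g s) (fun s => Ω s ^ 2 • g' s) E t a b)
            (fun a b => (Tmat (fun s => Ω s ^ 2 • g s) (fun s => Ω s ^ 2 • g' s) E t)⁻¹ a b)
            (fun a x y => c t a x y)
            (fun m p k => chr g' m p k t - chr g m p k t)
            (fun m p k => chr (fun s => Ω s ^ 2 • g' s) m p k t
              - chr (fun s => Ω s ^ 2 • g s) m p k t)
            (fun p => E t p) (fun p => e t p) (fun l => pder l Ω t / Ω t) (Ω t) hω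
            hGι hκG' hG'κ hGs hG's (hF.comm t ht) (hF.unit t ht) (hI.defn t ht)
            hTiT hThThi hΔh hTh hmul a i j
  exact ⟨hc.trans (hI.mul_eq t ht a i j).symm, hc⟩
end
end

section
/- Let n ≥ 2 and let a, b, c, d be real numbers with ad − bc = 1. On the open set V = {t ∈ ℝ^n : c·t^n + d ≠ 0} define the smooth functions t̃^1(t) = t^1 + (c/(2(c·t^n + d)))·Σ_{i=2}^{n−1} t^i t^{n+1−i}, t̃^i(t) = t^i/(c·t^n + d) for 2 ≤ i ≤ n−1, and t̃^n(t) = (a·t^n + b)/(c·t^n + d). Then for every t ∈ V and all vectors u, v ∈ ℝ^n: Σ_{i=1}^n (D t̃^i(t))(u) · (D t̃^{n+1−i}(t))(v) = (c·t^n + d)^{−2} · Σ_{i=1}^n u_i v_{n+1−i}, where D t̃^i(t) denotes the Fréchet derivative of t̃^i at t. In other words, the map t ↦ (t̃^1,…,t̃^n) pulls back the constant anti-diagonal quadratic form Σ_{i} dt̃^i dt̃^{n+1−i} to the metric with components h̃_{ij}(t) = (c·t^n + d)^{−2} δ_{i+j,n+1}, so that (t̃^1,…,t̃^n) are flat coordinates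 for h̃. -/
open scoped BigOperators

noncomputable section

variable {n : ℕ}

/-- The SL(2)-transformed coordinates t̃ of the modified Saito construction. -/
def saitoCoord (n : ℕ) (hn : 2 ≤ n) (a b c d : ℝ) (i : Fin n) (t : Pt n) : ℝ :=
  if i.val = 0 then
    t i + (c / (2 * (c * t ⟨n - 1, by omega⟩ + d))) *
      ∑ j : Fin n, (if 1 ≤ j.val ∧ j.val ≤ n - 2 then t j * t j.rev else 0)
  else if i.val = n - 1 then
    (a * t ⟨n - 1, by omega⟩ + b) / (c * t ⟨n - 1, by omega⟩ + d)
  else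
    t i / (c * t ⟨n - 1, by omega⟩ + d)


noncomputable def prj {n : ℕ} (i : Fin n) : Pt n →L[ℝ] ℝ := ContinuousLinearMap.proj i

@[simp] lemma prj_apply {n : ℕ} (i : Fin n) (u : Pt n) : prj i u = u i := rfl

lemma hasF_Q {n : ℕ} (c d : ℝ) (P : Fin n) (t : Pt n) :
    HasFDerivAt (fun s : Pt n => c * s P + d) (c • prj P) t :=
  ((prj P).hasFDerivAt.const_mul c).add_const d

-- middle coordinate derivative
lemma mid_deriv {n : ℕ} (c d : ℝ) (P i : Fin n) (t : Pt n)
    (ht : c * t P + d ≠ 0) (u : Pt n) :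
    fderiv ℝ (fun s : Pt n => s i / (c * s P + d)) t u
      = (c * t P + d)⁻¹ * u i - c * t i * u P * ((c * t P + d)^2)⁻¹ := by
  have hq := hasF_Q c d P t
  have hinv := (hasFDerivAt_inv ht).comp t hq
  have h := (prj i).hasFDerivAt.mul hinv
  have h2 : HasFDerivAt (fun s : Pt n => s i * (c * s P + d)⁻¹) _ t := h
  rw [show (fun s : Pt n => s i / (c * s P + d)) = fun s => s i * (c * s P + d)⁻¹ from
    funext fun s => div_eq_mul_inv _ _, h2.fderiv]
  simp [ContinuousLinearMap.smulRight_apply]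
  ring

-- last coordinate derivative
lemma last_deriv {n : ℕ} (a b c d : ℝ) (P : Fin n) (t : Pt n)
    (ht : c * t P + d ≠ 0) (u : Pt n) :
    fderiv ℝ (fun s : Pt n => (a * s P + b) / (c * s P + d)) t u
      = (c * t P + d)⁻¹ * (a * u P) + (a * t P + b) * (c * u P * (-((c * t P + d)^2)⁻¹)) := by
  have hq := hasF_Q c d P t
  have hnum := hasF_Q a b P t
  have hinv := (hasFDerivAt_inv ht).comp t hq
  have h := hnum.mul hinv
  have h2 : HasFDerivAt (fun s : Pt n => (a * s P + b) * (c * s P + d)⁻¹) _ t := h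
  rw [show (fun s : Pt n => (a * s P + b) / (c * s P + d))
      = fun s => (a * s P + b) * (c * s P + d)⁻¹ from funext fun s => div_eq_mul_inv _ _,
    h2.fderiv]
  simp [ContinuousLinearMap.smulRight_apply]
  ring

-- first coordinate derivative
lemma first_deriv {n : ℕ} (c d : ℝ) (P z : Fin n) (t : Pt n)
    (ht : c * t P + d ≠ 0) (u : Pt n) :
    fderiv ℝ (fun s : Pt n => s z + (c / (2 * (c * s P + d))) *
        ∑ j : Fin n, (if 1 ≤ j.val ∧ j.val ≤ n - 2 then s j * s j.rev else 0)) t u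
      = u z
        + (c * (2 * (c * t P + d))⁻¹) *
            (∑ j : Fin n, (if 1 ≤ j.val ∧ j.val ≤ n - 2
              then t j * u j.rev + t j.rev * u j else 0))
        + (∑ j : Fin n, (if 1 ≤ j.val ∧ j.val ≤ n - 2 then t j * t j.rev else 0)) *
            (c * ((2 * (c * u P)) * (-((2 * (c * t P + d))^2)⁻¹))) := by
  have h2t : (2 : ℝ) * (c * t P + d) ≠ 0 := by
    simpa using ht
  have hg2 : HasFDerivAt (fun s : Pt n => 2 * (c * s P + d)) ((2 : ℝ) • (c • prj P)) t :=
    (hasF_Q c d P t).const_mul 2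
  have hinv2 := (hasFDerivAt_inv h2t).comp t hg2
  have hC := hinv2.const_mul c
  have hS : HasFDerivAt
      (fun s : Pt n => ∑ j : Fin n, (if 1 ≤ j.val ∧ j.val ≤ n - 2 then s j * s j.rev else 0))
      (∑ j : Fin n, (if 1 ≤ j.val ∧ j.val ≤ n - 2
          then (t j • prj j.rev + t j.rev • prj j : Pt n →L[ℝ] ℝ) else 0)) t := by
    apply HasFDerivAt.fun_sum
    intro j _
    by_cases hc : 1 ≤ j.val ∧ j.val ≤ n - 2
    · simp only [if_pos hc]
      exact (prj j).hasFDerivAt.mul (prj j.rev).hasFDerivAt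
    · simp only [if_neg hc]
      exact hasFDerivAt_const 0 t
  have h := (prj z).hasFDerivAt.add (hC.mul hS)
  have h2 : HasFDerivAt (fun s : Pt n => s z + (c * (2 * (c * s P + d))⁻¹) *
      ∑ j : Fin n, (if 1 ≤ j.val ∧ j.val ≤ n - 2 then s j * s j.rev else 0)) _ t := h
  rw [show (fun s : Pt n => s z + (c / (2 * (c * s P + d))) *
        ∑ j : Fin n, (if 1 ≤ j.val ∧ j.val ≤ n - 2 then s j * s j.rev else 0))
      = fun s : Pt n => s z + (c * (2 * (c * s P + d))⁻¹) *
        ∑ j : Fin n, (if 1 ≤ j.val ∧ j.val ≤ n - 2 then s j * s j.rev else 0) from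
      funext fun s => by rw [div_eq_mul_inv],
    h2.fderiv]
  simp only [ContinuousLinearMap.add_apply, ContinuousLinearMap.smul_apply,
    ContinuousLinearMap.comp_apply, ContinuousLinearMap.smulRight_apply,
    ContinuousLinearMap.one_apply, ContinuousLinearMap.sum_apply, prj_apply,
    smul_eq_mul, apply_ite (fun (L : Pt n →L[ℝ] ℝ) => L u), ContinuousLinearMap.zero_apply]
  simp only [Function.comp_apply, ContinuousLinearMap.toSpanSingleton_apply, smul_eq_mul]
  ring

/-- The coordinates t̃ pull back the constant anti-diagonal quadratic form
to the metric (c t^n + d)^{-2} δ_{i+j,n+1}; i.e. they are flat coordinates for h̃. -/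
theorem stmt11 {n : ℕ} (hn : 2 ≤ n) (a b c d : ℝ) (habcd : a * d - b * c = 1) :
    ∀ t : Pt n, c * t ⟨n - 1, by omega⟩ + d ≠ 0 →
      ∀ u v : Fin n → ℝ,
        (∑ i : Fin n,
            fderiv ℝ (saitoCoord n hn a b c d i) t u
              * fderiv ℝ (saitoCoord n hn a b c d i.rev) t v)
          = ((c * t ⟨n - 1, by omega⟩ + d) ^ 2)⁻¹ * ∑ i : Fin n, u i * v i.rev := by
  intro t ht u v
  have npos : 0 < n := by omega
  set P : Fin n := ⟨n - 1, by omega⟩ with hPdef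
  set z : Fin n := ⟨0, by omega⟩ with hzdef
  have hQ : c * t P + d ≠ 0 := ht
  set Q : ℝ := c * t P + d with hQdef
  clear_value Q
  have hQ0 : c * t P + d ≠ 0 := by rw [← hQdef]; exact hQ
  have hPval : P.val = n - 1 := rfl
  have hzval : z.val = 0 := rfl
  have hPz : P ≠ z := by
    rw [Ne, Fin.ext_iff, hPval, hzval]
    omega
  have hzrev : z.rev = P := by
    simp [Fin.ext_iff, Fin.val_rev, hPval, hzval]
  have hPrev : P.rev = z := by
    simp [Fin.ext_iff, Fin.val_rev, hPval, hzval]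
    omega
  set R : Finset (Fin n) := (Finset.univ.erase z).erase P with hRdef
  have hmemR : ∀ i : Fin n, i ∈ R ↔ (1 ≤ i.val ∧ i.val ≤ n - 2) := by
    intro i
    simp only [hRdef, Finset.mem_erase, Finset.mem_univ, and_true, Fin.ext_iff, hPval, hzval]
    have := i.isLt
    omega
  -- splitting a sum over Fin n
  have hsplit : ∀ g : Fin n → ℝ, ∑ i : Fin n, g i = g z + (g P + ∑ i ∈ R, g i) := by
    intro g
    rw [← Finset.add_sum_erase _ g (Finset.mem_univ z),
      ← Finset.add_sum_erase _ g (Finset.mem_erase.2 ⟨hPz, Finset.mem_univ P⟩)]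
  -- reindexing by rev on R
  have hrev : ∀ g : Fin n → ℝ, ∑ i ∈ R, g i.rev = ∑ i ∈ R, g i := by
    intro g
    refine Finset.sum_equiv (Fin.revPerm (n := n)) (fun i => ?_) (fun i _ => rfl)
    simp only [hmemR, Fin.revPerm_apply, Fin.val_rev]
    omega
  have hswap : ∀ x y : Fin n → ℝ, ∑ j ∈ R, x j * y j.rev = ∑ j ∈ R, x j.rev * y j := by
    intro x y
    rw [← hrev (fun j => x j.rev * y j)]
    exact Finset.sum_congr rfl fun j _ => by rw [Fin.rev_rev]
  -- conditional sums are sums over R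
  have hcond : ∀ g : Fin n → ℝ,
      (∑ j : Fin n, (if 1 ≤ j.val ∧ j.val ≤ n - 2 then g j else 0)) = ∑ j ∈ R, g j := by
    intro g
    rw [← Finset.sum_filter]
    apply Finset.sum_congr _ fun _ _ => rfl
    ext i
    simp [hmemR, Finset.mem_filter]
  -- the three coordinate function shapes
  have hfun_mid : ∀ i : Fin n, i.val ≠ 0 → i.val ≠ n - 1 →
      saitoCoord n hn a b c d i = fun s => s i / (c * s P + d) := by
    intro i h1 h2
    funext s
    simp [saitoCoord, h1, h2, hPdef]
  have hfun_last :
      saitoCoord n hn a b c d P = fun s => (a * s P + b) / (c * s P + d) := by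
    funext s
    have h0 : P.val ≠ 0 := by omega
    simp [saitoCoord, h0, hPval, show n - 1 ≠ 0 by omega, hPdef]
  have hfun_first : saitoCoord n hn a b c d z = fun s => s z +
      (c / (2 * (c * s P + d))) *
        ∑ j : Fin n, (if 1 ≤ j.val ∧ j.val ≤ n - 2 then s j * s j.rev else 0) := by
    funext s
    simp [saitoCoord, hzval, hPdef]
  -- derivative values
  have hDmid : ∀ i : Fin n, i.val ≠ 0 → i.val ≠ n - 1 → ∀ w : Fin n → ℝ,
      fderiv ℝ (saitoCoord n hn a b c d i) t w
        = Q⁻¹ * w i - c * t i * w P * (Q ^ 2)⁻¹ := by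
    intro i h1 h2 w
    rw [hfun_mid i h1 h2, mid_deriv c d P i t hQ0 w, ← hQdef]
  have hDlast : ∀ w : Fin n → ℝ,
      fderiv ℝ (saitoCoord n hn a b c d P) t w = w P * (Q ^ 2)⁻¹ := by
    intro w
    rw [hfun_last, last_deriv a b c d P t hQ0 w, ← hQdef]
    have key : a * Q - (a * t P + b) * c = 1 := by
      rw [hQdef]; linear_combination habcd
    have expand : Q⁻¹ * (a * w P) + (a * t P + b) * (c * w P * (-(Q ^ 2)⁻¹))
        = (a * Q - (a * t P + b) * c) * w P * (Q ^ 2)⁻¹ := by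
      field_simp
      ring
    rw [expand, key, one_mul]
  have hDfirst : ∀ w : Fin n → ℝ,
      fderiv ℝ (saitoCoord n hn a b c d z) t w
        = w z + (c * (2 * Q)⁻¹) * (∑ j ∈ R, (t j * w j.rev + t j.rev * w j))
          + (∑ j ∈ R, t j * t j.rev) * (c * ((2 * (c * w P)) * (-((2 * Q) ^ 2)⁻¹))) := by
    intro w
    rw [hfun_first, first_deriv c d P z t hQ0 w, hcond, hcond, ← hQdef]
  -- abbreviations for the scalar sums
  set A : ℝ := ∑ i ∈ R, u i * v i.rev with hA
  set Bu : ℝ := ∑ i ∈ R, t i.rev * u i with hBu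
  set Bv : ℝ := ∑ i ∈ R, t i.rev * v i with hBv
  set S : ℝ := ∑ i ∈ R, t i * t i.rev with hS
  have hBu' : ∑ j ∈ R, t j * u j.rev = Bu := hswap t u
  have hBv' : ∑ j ∈ R, t j * v j.rev = Bv := hswap t v
  -- rewrite both sides
  rw [hsplit (fun i => fderiv ℝ (saitoCoord n hn a b c d i) t u
      * fderiv ℝ (saitoCoord n hn a b c d i.rev) t v),
    hsplit (fun i => u i * v i.rev)]
  simp only [hzrev, hPrev]
  rw [hDfirst u, hDfirst v, hDlast u, hDlast v]
  have hmid : ∑ i ∈ R, (fderiv ℝ (saitoCoord n hn a b c d i) t u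
      * fderiv ℝ (saitoCoord n hn a b c d i.rev) t v)
      = (Q⁻¹ * Q⁻¹) * A - (Q⁻¹ * (c * v P * (Q ^ 2)⁻¹)) * Bu
        - (Q⁻¹ * (c * u P * (Q ^ 2)⁻¹)) * Bv
        + (c * u P * (Q ^ 2)⁻¹ * (c * v P * (Q ^ 2)⁻¹)) * S := by
    have step : ∀ i ∈ R, fderiv ℝ (saitoCoord n hn a b c d i) t u
        * fderiv ℝ (saitoCoord n hn a b c d i.rev) t v
        = (Q⁻¹ * Q⁻¹) * (u i * v i.rev) - (Q⁻¹ * (c * v P * (Q ^ 2)⁻¹)) * (t i.rev * u i)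
          - (Q⁻¹ * (c * u P * (Q ^ 2)⁻¹)) * (t i * v i.rev)
          + (c * u P * (Q ^ 2)⁻¹ * (c * v P * (Q ^ 2)⁻¹)) * (t i * t i.rev) := by
      intro i hi
      have h1 : i.val ≠ 0 := by
        have := (hmemR i).1 hi; omega
      have h2 : i.val ≠ n - 1 := by
        have := (hmemR i).1 hi; omega
      have h1r : i.rev.val ≠ 0 := by
        have := (hmemR i).1 hi; simp [Fin.val_rev]; omega
      have h2r : i.rev.val ≠ n - 1 := by
        have := (hmemR i).1 hi; simp [Fin.val_rev]; omega
      rw [hDmid i h1 h2 u, hDmid i.rev h1r h2r v]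
      ring
    rw [Finset.sum_congr rfl step]
    simp only [Finset.sum_add_distrib, Finset.sum_sub_distrib, ← Finset.mul_sum]
    rw [← hA, ← hBu, ← hS, hBv']
  have hsum_u : ∑ j ∈ R, (t j * u j.rev + t j.rev * u j) = Bu + Bu := by
    rw [Finset.sum_add_distrib, hBu', ← hBu]
  have hsum_v : ∑ j ∈ R, (t j * v j.rev + t j.rev * v j) = Bv + Bv := by
    rw [Finset.sum_add_distrib, hBv', ← hBv]
  rw [hmid, hsum_u, hsum_v]
  ring
end
end
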